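/- arXiv:1104.0756 — 10 statements merged into one kernel-verified Lean document; each statement's English description precedes it below -/
import Mathlib

section
/- Let f : Γ₊ → ℝ be a symmetric function on the open positive cone Γ₊ = {κ ∈ ℝⁿ : κᵢ > 0 for all i} which is strictly increasing in each variable, positively homogeneous of degree 1, and positive. Then f extends continuously to the closure of Γ₊ (via f(A) = lim_{s→0⁺} f(A + s·(1,...,1))). -/
open Set Filter Topology

/-!
The extension is `g A = inf_{s > 0} f (A + s • 1)`: since `s ↦ f (A + s • 1)` is monotone and
positive, this infimum is its limit as `s → 0⁺`. Monotonicity and homogeneity of `f` pass to `g`.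
Continuity of `g` at `A ≥ 0` is a squeeze: every `B ≥ 0` near `A` satisfies `B ≤ A + s • 1`, so
`g B ≤ f (A + s • 1)`, which is close to `g A` for small `s`; and, because the positive coordinates
of `A` are bounded away from `0`, also `c • A ≤ B` for a fixed `c < 1` close to `1`, so
`g B ≥ c * g A`.
-/

theorem monotoneOn_univ_pi_of_update {ι α β : Type*} [Finite ι] [DecidableEq ι] [Preorder α]
    [Preorder β] {t : ι → Set α} {f : (ι → α) → β}
    (hf : ∀ κ ∈ univ.pi t, ∀ i, ∀ a ∈ t i, ∀ b ∈ t i, a ≤ b →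
      f (Function.update κ i a) ≤ f (Function.update κ i b)) :
    MonotoneOn f (univ.pi t) := by
  have := Fintype.ofFinite ι
  intro κ hκ κ' hκ' hle
  suffices ∀ T : Finset ι, f κ ≤ f (T.piecewise κ' κ) by
    simpa using this Finset.univ
  intro T
  induction T using Finset.induction_on with
  | empty => simp
  | @insert a T ha ih =>
    set P := T.piecewise κ' κ
    have hP : P ∈ univ.pi t := T.piecewise_mem_set_pi hκ' hκ
    have hPa : P a = κ a := T.piecewise_eq_of_notMem _ _ ha
    calc f κ ≤ f P := ih
      _ = f (Function.update P a (κ a)) := by rw [← hPa, Function.update_eq_self]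
      _ ≤ f (Function.update P a (κ' a)) :=
        hf P hP a _ (hκ a (mem_univ a)) _ (hκ' a (mem_univ a)) (hle a)
      _ = f ((insert a T).piecewise κ' κ) := by rw [Finset.piecewise_insert]

def posCone (ι : Type*) : Set (ι → ℝ) := {κ | ∀ i, 0 < κ i}

section PosCone

variable {ι : Type*}

theorem posCone_eq_pi : posCone ι = univ.pi fun _ => Ioi 0 := by
  ext κ; simp [posCone]

theorem closure_posCone : closure (posCone ι) = Ici 0 := by
  rw [posCone_eq_pi, closure_pi_set, ← pi_univ_Ici]
  simp

theorem add_smul_one_mem_posCone {A : ι → ℝ} (hA : 0 ≤ A) {s : ℝ} (hs : 0 < s) :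
    A + s • 1 ∈ posCone ι := fun i => by
  simpa using add_pos_of_nonneg_of_pos (hA i) hs

theorem monotoneOn_posCone_of_update {f : (ι → ℝ) → ℝ} [Finite ι] [DecidableEq ι]
    (hf : ∀ κ ∈ posCone ι, ∀ i (s t : ℝ), 0 < s → s < t →
      f (Function.update κ i s) < f (Function.update κ i t)) :
    MonotoneOn f (posCone ι) := by
  rw [posCone_eq_pi]
  refine monotoneOn_univ_pi_of_update fun κ hκ i a ha b _ hab => ?_
  rcases hab.lt_or_eq with hab | rfl
  · exact (hf κ (by simpa [posCone_eq_pi] using hκ) i a b ha hab).le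
  · rfl

theorem smul_mem_posCone {κ : ι → ℝ} (hκ : κ ∈ posCone ι) {c : ℝ} (hc : 0 < c) :
    c • κ ∈ posCone ι := fun i => mul_pos hc (hκ i)

theorem exists_pos_le_of_pos [Finite ι] (A : ι → ℝ) : ∃ m > 0, ∀ i, 0 < A i → m ≤ A i := by
  have : ∀ᶠ m in 𝓝[>] (0 : ℝ), ∀ i, 0 < A i → m ≤ A i :=
    eventually_all.2 fun i => by
      by_cases hi : 0 < A i
      · filter_upwards [Ioo_mem_nhdsGT hi] with m hm using fun _ => hm.2.le
      · simp [hi]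
  exact (this.and self_mem_nhdsWithin).exists.imp fun m hm => ⟨hm.2, hm.1⟩

end PosCone

noncomputable def diagonalLimit {ι : Type*} (f : (ι → ℝ) → ℝ) (A : ι → ℝ) : ℝ :=
  sInf ((fun s : ℝ => f (A + s • 1)) '' Ioi 0)

section DiagonalLimit

variable {ι : Type*} {f : (ι → ℝ) → ℝ} {A B : ι → ℝ}

theorem tendsto_diagonalLimit (hf : MonotoneOn f (posCone ι)) (hpos : ∀ κ ∈ posCone ι, 0 < f κ)
    (hA : 0 ≤ A) :
    Tendsto (fun s : ℝ => f (A + s • 1)) (𝓝[>] 0) (𝓝 (diagonalLimit f A)) := by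
  refine MonotoneOn.tendsto_nhdsGT (fun s hs t ht hst => ?_) ⟨0, ?_⟩
  · exact hf (add_smul_one_mem_posCone hA hs) (add_smul_one_mem_posCone hA ht)
      (add_le_add_right (smul_le_smul_of_nonneg_right hst zero_le_one) A)
  · rintro _ ⟨s, hs, rfl⟩
    exact (hpos _ (add_smul_one_mem_posCone hA hs)).le

theorem diagonalLimit_eq [Finite ι] (hf : MonotoneOn f (posCone ι))
    (hhom : ∀ κ ∈ posCone ι, ∀ c : ℝ, 0 < c → f (c • κ) = c * f κ)
    (hpos : ∀ κ ∈ posCone ι, 0 < f κ) {κ : ι → ℝ} (hκ : κ ∈ posCone ι) :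
    diagonalLimit f κ = f κ := by
  obtain ⟨m, hm, hκm⟩ := exists_pos_le_of_pos κ
  have hκ0 : 0 ≤ κ := fun i => (hκ i).le
  have hscale : Tendsto (fun s : ℝ => (1 + s / m) * f κ) (𝓝[>] 0) (𝓝 (f κ)) := by
    have : Continuous fun s : ℝ => (1 + s / m) * f κ := by fun_prop
    simpa using (this.tendsto 0).mono_left nhdsWithin_le_nhds
  refine tendsto_nhds_unique (tendsto_diagonalLimit hf hpos hκ0)
    (tendsto_of_tendsto_of_tendsto_of_le_of_le' tendsto_const_nhds hscale ?_ ?_)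
  all_goals filter_upwards [self_mem_nhdsWithin] with s (hs : 0 < s)
  · refine hf hκ (add_smul_one_mem_posCone hκ0 hs) fun i => ?_
    simpa using hs.le
  · rw [← hhom κ hκ _ (by positivity)]
    refine hf (add_smul_one_mem_posCone hκ0 hs) (smul_mem_posCone hκ (by positivity)) fun i => ?_
    have : s ≤ s / m * κ i := by
      rw [div_mul_eq_mul_div, le_div_iff₀ hm]
      exact mul_le_mul_of_nonneg_left (hκm i (hκ i)) hs.le
    simp only [Pi.add_apply, Pi.smul_apply, Pi.one_apply, smul_eq_mul]
    linarith

theorem diagonalLimit_mono (hf : MonotoneOn f (posCone ι)) (hpos : ∀ κ ∈ posCone ι, 0 < f κ)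
    (hA : 0 ≤ A) (hAB : A ≤ B) : diagonalLimit f A ≤ diagonalLimit f B := by
  refine le_of_tendsto_of_tendsto (tendsto_diagonalLimit hf hpos hA)
    (tendsto_diagonalLimit hf hpos (hA.trans hAB)) ?_
  filter_upwards [self_mem_nhdsWithin] with s (hs : 0 < s)
  exact hf (add_smul_one_mem_posCone hA hs) (add_smul_one_mem_posCone (hA.trans hAB) hs)
    (add_le_add_left hAB _)

theorem diagonalLimit_smul (hf : MonotoneOn f (posCone ι))
    (hhom : ∀ κ ∈ posCone ι, ∀ c : ℝ, 0 < c → f (c • κ) = c * f κ)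
    (hpos : ∀ κ ∈ posCone ι, 0 < f κ) (hA : 0 ≤ A) {c : ℝ} (hc : 0 < c) :
    diagonalLimit f (c • A) = c * diagonalLimit f A := by
  have hdiv : Tendsto (· / c) (𝓝[>] (0 : ℝ)) (𝓝[>] 0) := by
    refine tendsto_nhdsWithin_iff.2 ⟨?_, ?_⟩
    · simpa using ((continuous_id.div_const c).tendsto 0).mono_left nhdsWithin_le_nhds
    · filter_upwards [self_mem_nhdsWithin] with s (hs : 0 < s) using div_pos hs hc
  refine tendsto_nhds_unique (tendsto_diagonalLimit hf hpos (smul_nonneg hc.le hA))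
    ((((tendsto_diagonalLimit hf hpos hA).comp hdiv).const_mul c).congr' ?_)
  filter_upwards [self_mem_nhdsWithin] with s (hs : 0 < s)
  rw [Function.comp_apply, ← hhom _ (add_smul_one_mem_posCone hA (div_pos hs hc)) c hc,
    smul_add, smul_smul, mul_div_cancel₀ s hc.ne']

theorem eventually_lt_diagonalLimit [Finite ι] (hf : MonotoneOn f (posCone ι))
    (hhom : ∀ κ ∈ posCone ι, ∀ c : ℝ, 0 < c → f (c • κ) = c * f κ)
    (hpos : ∀ κ ∈ posCone ι, 0 < f κ) (hA : 0 ≤ A) {a : ℝ} (ha : a < diagonalLimit f A) :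
    ∀ᶠ B in 𝓝[Ici 0] A, a < diagonalLimit f B := by
  obtain ⟨c, hac, hc0, hc1⟩ : ∃ c : ℝ, a < c * diagonalLimit f A ∧ c ∈ Ioo 0 1 := by
    have : Tendsto (fun c : ℝ => c * diagonalLimit f A) (𝓝[<] 1) (𝓝 (diagonalLimit f A)) := by
      simpa using
        ((continuous_mul_const (diagonalLimit f A)).tendsto 1).mono_left nhdsWithin_le_nhds
    exact ((this.eventually (lt_mem_nhds ha)).and (Ioo_mem_nhdsLT zero_lt_one)).exists
  obtain ⟨m, hm, hAm⟩ := exists_pos_le_of_pos A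
  have hnear : ∀ᶠ B in 𝓝 A, ∀ i, A i - (1 - c) * m < B i :=
    eventually_all.2 fun i => continuousAt_const.eventually_lt (continuous_apply i).continuousAt
      (by nlinarith)
  filter_upwards [self_mem_nhdsWithin, nhdsWithin_le_nhds hnear] with B (hB : 0 ≤ B) hBA
  have hcA : c • A ≤ B := fun i => by
    rcases (hA i).eq_or_lt with h | h
    · simpa [← h] using hB i
    · have := hAm i h
      have := hBA i
      simp only [Pi.smul_apply, smul_eq_mul]
      nlinarith
  calc a < c * diagonalLimit f A := hac
    _ = diagonalLimit f (c • A) := (diagonalLimit_smul hf hhom hpos hA hc0).symm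
    _ ≤ diagonalLimit f B := diagonalLimit_mono hf hpos (smul_nonneg hc0.le hA) hcA

theorem eventually_diagonalLimit_lt [Finite ι] (hf : MonotoneOn f (posCone ι))
    (hhom : ∀ κ ∈ posCone ι, ∀ c : ℝ, 0 < c → f (c • κ) = c * f κ)
    (hpos : ∀ κ ∈ posCone ι, 0 < f κ) (hA : 0 ≤ A) {b : ℝ} (hb : diagonalLimit f A < b) :
    ∀ᶠ B in 𝓝[Ici 0] A, diagonalLimit f B < b := by
  obtain ⟨s, hsb, hs⟩ : ∃ s, f (A + s • 1) < b ∧ 0 < s :=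
    (((tendsto_diagonalLimit hf hpos hA).eventually (gt_mem_nhds hb)).and
      self_mem_nhdsWithin).exists
  have hnear : ∀ᶠ B in 𝓝 A, ∀ i, B i < (A + s • 1) i :=
    eventually_all.2 fun i => (continuous_apply i).continuousAt.eventually_lt continuousAt_const
      (by simpa using hs)
  filter_upwards [self_mem_nhdsWithin, nhdsWithin_le_nhds hnear] with B (hB : 0 ≤ B) hBA
  calc diagonalLimit f B ≤ diagonalLimit f (A + s • 1) :=
        diagonalLimit_mono hf hpos hB fun i => (hBA i).le
    _ = f (A + s • 1) := diagonalLimit_eq hf hhom hpos (add_smul_one_mem_posCone hA hs)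
    _ < b := hsb

theorem continuousOn_diagonalLimit [Finite ι] (hf : MonotoneOn f (posCone ι))
    (hhom : ∀ κ ∈ posCone ι, ∀ c : ℝ, 0 < c → f (c • κ) = c * f κ)
    (hpos : ∀ κ ∈ posCone ι, 0 < f κ) : ContinuousOn (diagonalLimit f) (Ici 0) :=
  fun _ hA => tendsto_order.2 ⟨fun _ ha => eventually_lt_diagonalLimit hf hhom hpos hA ha,
    fun _ hb => eventually_diagonalLimit_lt hf hhom hpos hA hb⟩

end DiagonalLimit

theorem monotone_homogeneous_extension_general (n : ℕ)
    (f : (Fin n → ℝ) → ℝ) (Γ : Set (Fin n → ℝ)) (hΓ : Γ = {κ | ∀ i, 0 < κ i})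
    (hmono : ∀ κ ∈ Γ, ∀ (i : Fin n) (s t : ℝ), 0 < s → s < t →
      f (Function.update κ i s) < f (Function.update κ i t))
    (hhom : ∀ κ ∈ Γ, ∀ lam : ℝ, 0 < lam → f (lam • κ) = lam * f κ)
    (hpos : ∀ κ ∈ Γ, 0 < f κ) :
    ∃ g : (Fin n → ℝ) → ℝ, ContinuousOn g (closure Γ) ∧
      (∀ κ ∈ Γ, g κ = f κ) ∧
      (∀ A ∈ closure Γ,
        Tendsto (fun s : ℝ => f (A + s • (1 : Fin n → ℝ)))
          (nhdsWithin 0 (Ioi 0)) (nhds (g A))) := by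
  obtain rfl : Γ = posCone (Fin n) := hΓ
  have hf : MonotoneOn f (posCone (Fin n)) := monotoneOn_posCone_of_update hmono
  rw [closure_posCone]
  exact ⟨diagonalLimit f, continuousOn_diagonalLimit hf hhom hpos,
    fun κ hκ => diagonalLimit_eq hf hhom hpos hκ, fun A hA => tendsto_diagonalLimit hf hpos hA⟩

/-- A symmetric, strictly increasing, degree-one homogeneous, positive function on the
open positive cone extends continuously to the closure of the cone, via
`g A = lim_{s → 0⁺} f (A + s • (1,...,1))`. -/
theorem monotone_homogeneous_extension (n : ℕ) (hn : 0 < n)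
    (f : (Fin n → ℝ) → ℝ) (Γ : Set (Fin n → ℝ)) (hΓ : Γ = {κ | ∀ i, 0 < κ i})
    (hsym : ∀ σ : Equiv.Perm (Fin n), ∀ κ ∈ Γ, f (κ ∘ σ) = f κ)
    (hmono : ∀ κ ∈ Γ, ∀ (i : Fin n) (s t : ℝ), 0 < s → s < t →
      f (Function.update κ i s) < f (Function.update κ i t))
    (hhom : ∀ κ ∈ Γ, ∀ lam : ℝ, 0 < lam → f (lam • κ) = lam * f κ)
    (hpos : ∀ κ ∈ Γ, 0 < f κ) :
    ∃ g : (Fin n → ℝ) → ℝ, ContinuousOn g (closure Γ) ∧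
      (∀ κ ∈ Γ, g κ = f κ) ∧
      (∀ A ∈ closure Γ,
        Tendsto (fun s : ℝ => f (A + s • (1 : Fin n → ℝ)))
          (nhdsWithin 0 (Ioi 0)) (nhds (g A))) :=
  monotone_homogeneous_extension_general n f Γ hΓ hmono hhom hpos
end

section
/- Let f be smooth, symmetric, strictly increasing in each variable, positively homogeneous of degree one, and positive on Γ₊. Then f is inverse-concave (i.e. f_*(x) := f(x₁⁻¹,...,xₙ⁻¹)⁻¹ is concave on Γ₊) if and only if the matrix Q[f]_{ij} = ∂²f/∂xᵢ∂xⱼ + (2/xᵢ)(∂f/∂xᵢ)δᵢⱼ is positive semidefinite at every point of Γ₊. -/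
open Set Filter

section Aux
variable {n : ℕ}

noncomputable def Fd (f : (Fin n → ℝ) → ℝ) (i : Fin n) (p : Fin n → ℝ) : ℝ :=
  fderiv ℝ f p (Pi.single i 1)
noncomputable def Md (f : (Fin n → ℝ) → ℝ) (i j : Fin n) (p : Fin n → ℝ) : ℝ :=
  fderiv ℝ (Fd f j) p (Pi.single i 1)

lemma clm_pi (T : (Fin n → ℝ) →L[ℝ] ℝ) (w : Fin n → ℝ) :
    T w = ∑ i, w i * T (Pi.single i 1) := by
  have h := LinearMap.pi_apply_eq_sum_univ (T : (Fin n → ℝ) →ₗ[ℝ] ℝ) w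
  have : ∀ i : Fin n, (fun j => if i = j then (1:ℝ) else 0) = Pi.single i 1 := by
    intro i; funext j; simp [Pi.single_apply, eq_comm]
  simp only [this] at h
  simpa [smul_eq_mul] using h

lemma deriv_nonpos_of_antitoneOn {ψ : ℝ → ℝ} {D : Set ℝ} {m t : ℝ} (hD : D ∈ nhds t)
    (ha : AntitoneOn ψ D) (hd : HasDerivAt ψ m t) : m ≤ 0 := by
  have hmono : nhdsWithin t (Ioi t) ≤ nhdsWithin t {t}ᶜ :=
    nhdsWithin_mono t (fun s hs => ne_of_gt hs)
  have hslope : Filter.Tendsto (slope ψ t) (nhdsWithin t (Ioi t)) (nhds m) :=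
    (hasDerivAt_iff_tendsto_slope.1 hd).mono_left hmono
  have htD : t ∈ D := mem_of_mem_nhds hD
  refine le_of_tendsto hslope ?_
  filter_upwards [self_mem_nhdsWithin, mem_nhdsWithin_of_mem_nhds hD] with s hs hsD
  rw [slope_def_field]
  apply div_nonpos_of_nonpos_of_nonneg
  · have := ha htD hsD (le_of_lt hs); linarith
  · have : t < s := hs; linarith

section Basic
variable {f : (Fin n → ℝ) → ℝ} {Γ : Set (Fin n → ℝ)} (hΓo : IsOpen Γ)
  (hsmooth : ContDiffOn ℝ (⊤ : ℕ∞) f Γ)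
include hΓo hsmooth

lemma contDiffAt_of_mem {p : Fin n → ℝ} (hp : p ∈ Γ) : ContDiffAt ℝ (⊤ : ℕ∞) f p :=
  hsmooth.contDiffAt (hΓo.mem_nhds hp)

lemma hasFDerivAt_of_mem {p : Fin n → ℝ} (hp : p ∈ Γ) :
    HasFDerivAt f (fderiv ℝ f p) p :=
  ((contDiffAt_of_mem hΓo hsmooth hp).differentiableAt (by simp)).hasFDerivAt

lemma contDiffAt_fderiv {p : Fin n → ℝ} (hp : p ∈ Γ) :
    ContDiffAt ℝ (⊤ : ℕ∞) (fderiv ℝ f) p :=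
  (contDiffAt_of_mem hΓo hsmooth hp).fderiv_right ((by simp))

lemma hasFDerivAt_Fd {p : Fin n → ℝ} (hp : p ∈ Γ) (j : Fin n) :
    HasFDerivAt (Fd f j)
      ((ContinuousLinearMap.apply ℝ ℝ (Pi.single j 1)).comp (fderiv ℝ (fderiv ℝ f) p)) p := by
  have h2 : HasFDerivAt (fderiv ℝ f) (fderiv ℝ (fderiv ℝ f) p) p :=
    ((contDiffAt_fderiv hΓo hsmooth hp).differentiableAt (by simp)).hasFDerivAt
  exact ((ContinuousLinearMap.apply ℝ ℝ (Pi.single j 1)).hasFDerivAt).comp p h2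

lemma hasDerivAt_comp_f {c : ℝ → Fin n → ℝ} {c' : Fin n → ℝ} {t : ℝ}
    (hc : HasDerivAt c c' t) (hp : c t ∈ Γ) :
    HasDerivAt (fun s => f (c s)) (∑ i, c' i * Fd f i (c t)) t := by
  have := (hasFDerivAt_of_mem hΓo hsmooth hp).comp_hasDerivAt t hc
  convert this using 1
  all_goals first | rfl | exact (clm_pi _ _).symm

lemma hasDerivAt_comp_Fd {c : ℝ → Fin n → ℝ} {c' : Fin n → ℝ} {t : ℝ}
    (hc : HasDerivAt c c' t) (hp : c t ∈ Γ) (j : Fin n) :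
    HasDerivAt (fun s => Fd f j (c s)) (∑ i, c' i * Md f i j (c t)) t := by
  have h := (hasFDerivAt_Fd hΓo hsmooth hp j).comp_hasDerivAt t hc
  convert h using 1 <;> try rfl
  have hfd : fderiv ℝ (Fd f j) (c t) =
      (ContinuousLinearMap.apply ℝ ℝ (Pi.single j 1)).comp (fderiv ℝ (fderiv ℝ f) (c t)) :=
    (hasFDerivAt_Fd hΓo hsmooth hp j).fderiv
  have := clm_pi (fderiv ℝ (Fd f j) (c t)) c'
  rw [hfd] at this
  simpa [Md, hfd] using this.symm

lemma Md_symm {p : Fin n → ℝ} (hp : p ∈ Γ) (i j : Fin n) : Md f i j p = Md f j i p := by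
  have hs : IsSymmSndFDerivAt ℝ f p :=
    (contDiffAt_of_mem hΓo hsmooth hp).isSymmSndFDerivAt (by rw [minSmoothness_of_isRCLikeNormedField]; exact WithTop.coe_le_coe.2 (le_top : (2 : ℕ∞) ≤ ⊤))
  have h1 : ∀ j : Fin n, fderiv ℝ (Fd f j) p =
      (ContinuousLinearMap.apply ℝ ℝ (Pi.single j 1)).comp (fderiv ℝ (fderiv ℝ f) p) :=
    fun j => (hasFDerivAt_Fd hΓo hsmooth hp j).fderiv
  simp only [Md, h1, ContinuousLinearMap.coe_comp', Function.comp_apply,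
    ContinuousLinearMap.apply_apply]
  exact hs _ _
end Basic

section Euler
variable {f : (Fin n → ℝ) → ℝ} {Γ : Set (Fin n → ℝ)}
  (hΓ : Γ = {x | ∀ i, 0 < x i}) (hΓo : IsOpen Γ)
  (hsmooth : ContDiffOn ℝ (⊤ : ℕ∞) f Γ)
  (hhom : ∀ x ∈ Γ, ∀ lam : ℝ, 0 < lam → f (lam • x) = lam * f x)

include hΓ in
lemma smul_mem_G {y : Fin n → ℝ} (hy : y ∈ Γ) {lam : ℝ} (hl : 0 < lam) : lam • y ∈ Γ := by
  subst hΓ; intro i; exact mul_pos hl (hy i)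

include hΓ hΓo hsmooth hhom in
lemma Fd_homog {y : Fin n → ℝ} (hy : y ∈ Γ) {lam : ℝ} (hl : 0 < lam) (i : Fin n) :
    Fd f i (lam • y) = Fd f i y := by
  have hly : lam • y ∈ Γ := smul_mem_G hΓ hy hl
  have hdf : HasFDerivAt f (fderiv ℝ f (lam • y)) (lam • y) :=
    hasFDerivAt_of_mem hΓo hsmooth hly
  have hdfy : HasFDerivAt f (fderiv ℝ f y) y := hasFDerivAt_of_mem hΓo hsmooth hy
  have hsm : HasFDerivAt (fun x : Fin n → ℝ => lam • x)
      (lam • ContinuousLinearMap.id ℝ (Fin n → ℝ)) y :=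
    (ContinuousLinearMap.id ℝ (Fin n → ℝ)).hasFDerivAt.const_smul lam
  have h1 : HasFDerivAt (fun x => f (lam • x))
      ((fderiv ℝ f (lam • y)).comp (lam • ContinuousLinearMap.id ℝ (Fin n → ℝ))) y :=
    hdf.comp y hsm
  have h2 : HasFDerivAt (fun x => lam * f x) (lam • fderiv ℝ f y) y := hdfy.const_smul lam
  have heq : (fun x => f (lam • x)) =ᶠ[nhds y] (fun x => lam * f x) := by
    filter_upwards [hΓo.mem_nhds hy] with x hx using hhom x hx lam hl
  have h1' : HasFDerivAt (fun x => lam * f x)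
      ((fderiv ℝ f (lam • y)).comp (lam • ContinuousLinearMap.id ℝ (Fin n → ℝ))) y :=
    h1.congr_of_eventuallyEq heq.symm
  have := h1'.unique h2
  have happ := congrArg (fun T => T (Pi.single i 1)) this
  simp only [ContinuousLinearMap.coe_comp', Function.comp_apply,
    ContinuousLinearMap.smul_apply, ContinuousLinearMap.coe_smul',
    ContinuousLinearMap.coe_id', Pi.smul_apply, id_eq, smul_eq_mul] at happ
  have hmap : (fderiv ℝ f (lam • y)) (lam • (Pi.single i 1 : Fin n → ℝ))
      = lam * Fd f i (lam • y) := by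
    simp [Fd]
  rw [hmap] at happ
  exact mul_left_cancel₀ hl.ne' happ

include hΓ hΓo hsmooth hhom in
lemma euler1 {y : Fin n → ℝ} (hy : y ∈ Γ) : ∑ i, y i * Fd f i y = f y := by
  have hc : HasDerivAt (fun s : ℝ => s • y) y 1 := by
    simpa using (hasDerivAt_id (1:ℝ)).smul_const y
  have h1 : HasDerivAt (fun s : ℝ => f (s • y)) (∑ i, y i * Fd f i y) 1 := by
    have hm : (fun s : ℝ => s • y) 1 ∈ Γ := by simpa using hy
    have := hasDerivAt_comp_f hΓo hsmooth hc hm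
    simpa using this
  have h2 : HasDerivAt (fun s : ℝ => f (s • y)) (f y) 1 := by
    have heq : (fun s : ℝ => s * f y) =ᶠ[nhds 1] (fun s : ℝ => f (s • y)) := by
      filter_upwards [isOpen_Ioi.mem_nhds (show (0:ℝ) < 1 by norm_num)] with s hs
      exact (hhom y hy s hs).symm
    exact (by simpa using (hasDerivAt_id (1:ℝ)).mul_const (f y) :
      HasDerivAt (fun s : ℝ => s * f y) (f y) 1).congr_of_eventuallyEq heq.symm
  exact h1.unique h2

include hΓ hΓo hsmooth hhom in
lemma euler2 {y : Fin n → ℝ} (hy : y ∈ Γ) (i : Fin n) :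
    ∑ j, y j * Md f j i y = 0 := by
  have hc : HasDerivAt (fun s : ℝ => s • y) y 1 := by
    simpa using (hasDerivAt_id (1:ℝ)).smul_const y
  have hm : (fun s : ℝ => s • y) 1 ∈ Γ := by simpa using hy
  have h1 : HasDerivAt (fun s : ℝ => Fd f i (s • y)) (∑ j, y j * Md f j i y) 1 := by
    have := hasDerivAt_comp_Fd hΓo hsmooth hc hm i
    simpa using this
  have h2 : HasDerivAt (fun s : ℝ => Fd f i (s • y)) 0 1 := by
    have heq : (fun _ : ℝ => Fd f i y) =ᶠ[nhds 1] (fun s : ℝ => Fd f i (s • y)) := by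
      filter_upwards [isOpen_Ioi.mem_nhds (show (0:ℝ) < 1 by norm_num)] with s hs
      exact (Fd_homog hΓ hΓo hsmooth hhom hy hs i).symm
    exact (hasDerivAt_const 1 (Fd f i y)).congr_of_eventuallyEq heq.symm
  exact h1.unique h2
end Euler

noncomputable section LineDefs
variable (f : (Fin n → ℝ) → ℝ) (x v : Fin n → ℝ)

def lineC (t : ℝ) : Fin n → ℝ := fun i => (x i + t * v i)⁻¹
def lineD (t : ℝ) : Fin n → ℝ := fun i => -(v i) / (x i + t * v i)^2
def lineS (t : ℝ) : ℝ := ∑ i, lineD x v t i * Fd f i (lineC x v t)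
def lineQ (t : ℝ) : ℝ :=
  (∑ i, ∑ j, Md f i j (lineC x v t) * lineD x v t i * lineD x v t j)
    + 2 * ∑ i, Fd f i (lineC x v t) * (v i)^2 / (x i + t * v i)^3
def lineP1 (t : ℝ) : ℝ := -lineS f x v t / (f (lineC x v t))^2
def lineP2 (t : ℝ) : ℝ :=
  2 * (lineS f x v t)^2 / (f (lineC x v t))^3 - lineQ f x v t / (f (lineC x v t))^2
end LineDefs

section Line
variable {f : (Fin n → ℝ) → ℝ} {Γ : Set (Fin n → ℝ)}
  (hΓ : Γ = {x | ∀ i, 0 < x i}) (hΓo : IsOpen Γ)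
  (hsmooth : ContDiffOn ℝ (⊤ : ℕ∞) f Γ)
  (hpos : ∀ x ∈ Γ, 0 < f x)
  {x v : Fin n → ℝ} {t : ℝ} (ht : ∀ i, 0 < x i + t * v i)

include hΓ ht in
lemma lineC_mem : lineC x v t ∈ Γ := by
  subst hΓ; intro i; exact inv_pos.2 (ht i)

include ht in
lemma hasDerivAt_lineC : HasDerivAt (lineC x v) (lineD x v t) t := by
  rw [hasDerivAt_pi]
  intro i
  have hu : HasDerivAt (fun s : ℝ => x i + s * v i) (v i) t := by
    simpa using ((hasDerivAt_id t).mul_const (v i)).const_add (x i)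
  have := hu.fun_inv (ne_of_gt (ht i))
  simpa [lineC, lineD] using this

include ht in
lemma hasDerivAt_lineD (i : Fin n) :
    HasDerivAt (fun s => lineD x v s i) (2 * (v i)^2 / (x i + t * v i)^3) t := by
  have hu : HasDerivAt (fun s : ℝ => x i + s * v i) (v i) t := by
    simpa using ((hasDerivAt_id t).mul_const (v i)).const_add (x i)
  have hu2 : HasDerivAt (fun s : ℝ => (x i + s * v i)^2) (2 * (x i + t * v i) * v i) t := by
    simpa [mul_comm, mul_assoc] using hu.fun_pow 2
  have h := ((hu2.fun_inv (by have := ht i; positivity)).const_mul (-(v i)))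
  have : HasDerivAt (fun s => lineD x v s i)
      (-(v i) * (-(2 * (x i + t * v i) * v i) / ((x i + t * v i) ^ 2) ^ 2)) t := by
    simpa [lineD, div_eq_mul_inv] using h
  convert this using 1
  have hne : x i + t * v i ≠ 0 := ne_of_gt (ht i)
  field_simp

include hΓ hΓo hsmooth ht in
lemma hasDerivAt_G : HasDerivAt (fun s => f (lineC x v s)) (lineS f x v t) t :=
  hasDerivAt_comp_f hΓo hsmooth (hasDerivAt_lineC ht) (lineC_mem hΓ ht)

include hΓ hΓo hsmooth hpos ht in
lemma hasDerivAt_phi :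
    HasDerivAt (fun s => (f (lineC x v s))⁻¹) (lineP1 f x v t) t := by
  have h := (hasDerivAt_G hΓ hΓo hsmooth ht).fun_inv (ne_of_gt (hpos _ (lineC_mem hΓ ht)))
  simpa [lineP1, neg_div] using h

include hΓ hΓo hsmooth ht in
lemma hasDerivAt_lineS : HasDerivAt (lineS f x v)
    ((∑ i, (2 * (v i)^2 / (x i + t * v i)^3 * Fd f i (lineC x v t)
        + lineD x v t i * ∑ j, lineD x v t j * Md f j i (lineC x v t)))) t := by
  apply HasDerivAt.fun_sum
  intro i _
  exact (hasDerivAt_lineD ht i).mul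
    (hasDerivAt_comp_Fd hΓo hsmooth (hasDerivAt_lineC ht) (lineC_mem hΓ ht) i)

include hΓ hΓo hsmooth hpos ht in
lemma hasDerivAt_phi1 : HasDerivAt (lineP1 f x v) (lineP2 f x v t) t := by
  have hGpos := hpos _ (lineC_mem hΓ ht)
  have hG := hasDerivAt_G hΓ hΓo hsmooth ht
  have hS := hasDerivAt_lineS hΓ hΓo hsmooth ht
  have hG2 : HasDerivAt (fun s => (f (lineC x v s))^2)
      (2 * (f (lineC x v t)) * lineS f x v t) t := by
    simpa [mul_comm, mul_assoc] using hG.fun_pow 2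
  have h := (hS.fun_neg).fun_div hG2 (by positivity)
  have heq : lineP1 f x v = fun s => -lineS f x v s / (f (lineC x v s))^2 := rfl
  rw [heq]
  convert h using 1 <;> try rfl
  set G := f (lineC x v t) with hGdef
  set S := lineS f x v t
  set A := ∑ i, ∑ j, Md f i j (lineC x v t) * lineD x v t i * lineD x v t j with hA
  set B := ∑ i, Fd f i (lineC x v t) * (v i)^2 / (x i + t * v i)^3 with hB
  have hsum : (∑ i, (2 * (v i)^2 / (x i + t * v i)^3 * Fd f i (lineC x v t)
      + lineD x v t i * ∑ j, lineD x v t j * Md f j i (lineC x v t))) = 2 * B + A := by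
    rw [Finset.sum_add_distrib]
    congr 1
    · rw [hB, Finset.mul_sum]
      exact Finset.sum_congr rfl fun i _ => by ring
    · rw [hA, Finset.sum_comm]
      exact Finset.sum_congr rfl fun i _ => by
        rw [Finset.mul_sum]
        exact Finset.sum_congr rfl fun j _ => by ring
  rw [hsum]
  have hGne : G ≠ 0 := ne_of_gt hGpos
  show 2 * S^2 / G^3 - (A + 2 * B) / G^2 = _
  field_simp
  ring
end Line

section Alg
variable {n : ℕ}

lemma Q_split (y F d : Fin n → ℝ) (M : Fin n → Fin n → ℝ) :
    ∑ i, ∑ j, (M i j + if i = j then 2 / y i * F i else 0) * d i * d j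
      = (∑ i, ∑ j, M i j * d i * d j) + 2 * ∑ i, F i * (d i)^2 / y i := by
  have : ∀ i : Fin n, ∑ j, (M i j + if i = j then 2 / y i * F i else 0) * d i * d j
      = (∑ j, M i j * d i * d j) + 2 * (F i * (d i)^2 / y i) := by
    intro i
    have : ∀ j : Fin n, (M i j + if i = j then 2 / y i * F i else 0) * d i * d j
        = M i j * d i * d j + (if i = j then 2 * (F i * (d i)^2 / y i) else 0) := by
      intro j
      by_cases h : i = j
      · subst h
        rw [if_pos rfl, if_pos rfl]
        ring
      · simp only [if_neg h]; ring
    rw [Finset.sum_congr rfl fun j _ => this j, Finset.sum_add_distrib, Finset.sum_ite_eq]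
    simp
  rw [Finset.sum_congr rfl fun i _ => this i, Finset.sum_add_distrib, ← Finset.mul_sum]

lemma Q_expand (y F d : Fin n → ℝ) (M : Fin n → Fin n → ℝ) (fy t : ℝ)
    (hy : ∀ i, y i ≠ 0)
    (hE1 : ∑ i, y i * F i = fy)
    (hE2 : ∀ i : Fin n, ∑ j, y j * M j i = 0)
    (hMs : ∀ i j, M i j = M j i) :
    ∑ i, ∑ j, (M i j + if i = j then 2 / y i * F i else 0)
        * (d i - t * y i) * (d j - t * y j)
      = (∑ i, ∑ j, (M i j + if i = j then 2 / y i * F i else 0) * d i * d j)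
        - 4 * t * (∑ i, F i * d i) + 2 * t^2 * fy := by
  rw [Q_split, Q_split]
  have hZ1 : ∑ i, ∑ j, M i j * y i * d j = 0 := by
    rw [Finset.sum_comm]
    refine Finset.sum_eq_zero fun j _ => ?_
    have : ∑ i, M i j * y i * d j = (∑ i, y i * M i j) * d j := by
      rw [Finset.sum_mul]; exact Finset.sum_congr rfl fun i _ => by ring
    rw [this, hE2 j, zero_mul]
  have hZ2 : ∑ i, ∑ j, M i j * d i * y j = 0 := by
    refine Finset.sum_eq_zero fun i _ => ?_
    have : ∑ j, M i j * d i * y j = (∑ j, y j * M j i) * d i := by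
      rw [Finset.sum_mul]; exact Finset.sum_congr rfl fun j _ => by rw [hMs i j]; ring
    rw [this, hE2 i, zero_mul]
  have hZ3 : ∑ i, ∑ j, M i j * y i * y j = 0 := by
    refine Finset.sum_eq_zero fun i _ => ?_
    have : ∑ j, M i j * y i * y j = (∑ j, y j * M j i) * y i := by
      rw [Finset.sum_mul]; exact Finset.sum_congr rfl fun j _ => by rw [hMs i j]; ring
    rw [this, hE2 i, zero_mul]
  have hMpart : ∑ i, ∑ j, M i j * (d i - t * y i) * (d j - t * y j)
      = ∑ i, ∑ j, M i j * d i * d j := by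
    have expand : ∀ i j : Fin n, M i j * (d i - t * y i) * (d j - t * y j)
        = M i j * d i * d j - t * (M i j * y i * d j) - t * (M i j * d i * y j)
          + (t^2) * (M i j * y i * y j) := fun i j => by ring
    calc ∑ i, ∑ j, M i j * (d i - t * y i) * (d j - t * y j)
        = (∑ i, ∑ j, M i j * d i * d j) - t * (∑ i, ∑ j, M i j * y i * d j)
          - t * (∑ i, ∑ j, M i j * d i * y j) + t^2 * (∑ i, ∑ j, M i j * y i * y j) := by
          simp only [expand, Finset.sum_add_distrib, Finset.sum_sub_distrib, Finset.mul_sum]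
      _ = ∑ i, ∑ j, M i j * d i * d j := by rw [hZ1, hZ2, hZ3]; ring
  have hFpart : ∑ i, F i * (d i - t * y i)^2 / y i
      = (∑ i, F i * (d i)^2 / y i) - 2 * t * (∑ i, F i * d i) + t^2 * fy := by
    have expand : ∀ i : Fin n, F i * (d i - t * y i)^2 / y i
        = F i * (d i)^2 / y i - 2 * t * (F i * d i) + t^2 * (y i * F i) := by
      intro i
      have := hy i
      field_simp
      ring
    rw [Finset.sum_congr rfl fun i _ => expand i]
    simp only [Finset.sum_add_distrib, Finset.sum_sub_distrib, Finset.mul_sum]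
    rw [← Finset.mul_sum, ← Finset.mul_sum, hE1]
  rw [hMpart, hFpart]
  ring

lemma key_ineq (y F d : Fin n → ℝ) (M : Fin n → Fin n → ℝ) (fy : ℝ)
    (hfy : 0 < fy) (hy : ∀ i, y i ≠ 0)
    (hE1 : ∑ i, y i * F i = fy)
    (hE2 : ∀ i : Fin n, ∑ j, y j * M j i = 0)
    (hMs : ∀ i j, M i j = M j i)
    (hpsd : ∀ b : Fin n → ℝ,
      0 ≤ ∑ i, ∑ j, (M i j + if i = j then 2 / y i * F i else 0) * b i * b j) :
    2 * (∑ i, F i * d i)^2 / fy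
      ≤ ∑ i, ∑ j, (M i j + if i = j then 2 / y i * F i else 0) * d i * d j := by
  set L := ∑ i, F i * d i with hL
  have h := hpsd (fun i => d i - (L / fy) * y i)
  rw [Q_expand y F d M fy (L / fy) hy hE1 hE2 hMs] at h
  have hfy' : fy ≠ 0 := ne_of_gt hfy
  rw [← hL] at h
  have e : 4 * (L / fy) * L - 2 * (L / fy)^2 * fy = 2 * (L^2 / fy) := by
    field_simp; ring
  have e2 : 2 * L^2 / fy = 2 * (L^2 / fy) := by ring
  linarith
end Alg

section Bridge
variable {f : (Fin n → ℝ) → ℝ} {x v : Fin n → ℝ} {t : ℝ}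

lemma lineQ_eq (ht : ∀ i, 0 < x i + t * v i) :
    lineQ f x v t = ∑ i, ∑ j,
      (Md f i j (lineC x v t)
        + if i = j then 2 / (lineC x v t i) * Fd f i (lineC x v t) else 0)
      * lineD x v t i * lineD x v t j := by
  rw [Q_split (lineC x v t) (fun i => Fd f i (lineC x v t)) (lineD x v t)
    (fun i j => Md f i j (lineC x v t))]
  unfold lineQ
  congr 1
  rw [Finset.mul_sum, Finset.mul_sum]
  refine Finset.sum_congr rfl fun i _ => ?_
  have hne : x i + t * v i ≠ 0 := ne_of_gt (ht i)
  show 2 * (Fd f i (lineC x v t) * (v i)^2 / (x i + t * v i)^3)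
    = 2 * (Fd f i (lineC x v t) * (lineD x v t i)^2 / lineC x v t i)
  unfold lineD lineC
  field_simp
end Bridge
end Aux
/-- A function satisfying Conditions 1 is inverse-concave (i.e. `f_*` is concave) iff the
matrix `Q[f]_{ij} = ∂²f/∂xᵢ∂xⱼ + (2/xᵢ)(∂f/∂xᵢ)δᵢⱼ` is positive semidefinite on `Γ₊`. -/
theorem inverse_concave_iff_Q_psd (n : ℕ)
    (f : (Fin n → ℝ) → ℝ) (Γ : Set (Fin n → ℝ)) (hΓ : Γ = {x | ∀ i, 0 < x i})
    (hsmooth : ContDiffOn ℝ (⊤ : ℕ∞) f Γ)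
    (hsym : ∀ σ : Equiv.Perm (Fin n), ∀ x ∈ Γ, f (x ∘ σ) = f x)
    (hmono : ∀ x ∈ Γ, ∀ i, 0 < fderiv ℝ f x (Pi.single i 1))
    (hhom : ∀ x ∈ Γ, ∀ lam : ℝ, 0 < lam → f (lam • x) = lam * f x)
    (hpos : ∀ x ∈ Γ, 0 < f x) :
    ConcaveOn ℝ Γ (fun x => (f (fun i => (x i)⁻¹))⁻¹) ↔
      ∀ x ∈ Γ, ∀ b : Fin n → ℝ,
        0 ≤ ∑ i, ∑ j,
          (fderiv ℝ (fun y => fderiv ℝ f y (Pi.single j 1)) x (Pi.single i 1)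
            + (if i = j then 2 / x i * fderiv ℝ f x (Pi.single i 1) else 0)) * b i * b j := by
  have hΓo : IsOpen Γ := by
    rw [hΓ]
    have : {x : Fin n → ℝ | ∀ i, 0 < x i} = ⋂ i, (fun x : Fin n → ℝ => x i) ⁻¹' Ioi 0 := by
      ext x; simp
    rw [this]
    exact isOpen_iInter_of_finite fun i => (continuous_apply i).isOpen_preimage _ isOpen_Ioi
  have hΓc : Convex ℝ Γ := by
    rw [hΓ]; intro p hp q hq μ ν hμ hν hμν i
    simp only [Pi.add_apply, Pi.smul_apply, smul_eq_mul]
    rcases eq_or_lt_of_le hμ with rfl|hμ'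
    · simpa using mul_pos (by linarith : (0:ℝ) < ν) (hq i)
    rcases eq_or_lt_of_le hν with rfl|hν'
    · simpa using mul_pos hμ' (hp i)
    · exact add_pos (mul_pos hμ' (hp i)) (mul_pos hν' (hq i))
  have hlineMap : ∀ (p0 v : Fin n → ℝ) (t : ℝ),
      (AffineMap.lineMap p0 (p0 + v) : ℝ →ᵃ[ℝ] (Fin n → ℝ)) t = fun i => p0 i + t * v i := by
    intro p0 v t; funext i
    simp [AffineMap.lineMap_apply]
    ring
  have hDpre : ∀ (p0 v : Fin n → ℝ),
      {t : ℝ | ∀ i, 0 < p0 i + t * v i}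
        = (AffineMap.lineMap p0 (p0 + v) : ℝ →ᵃ[ℝ] (Fin n → ℝ)) ⁻¹' Γ := by
    intro p0 v
    ext t
    rw [mem_preimage, hlineMap p0 v t, hΓ]
    simp only [mem_setOf_eq]
  have hDopen : ∀ (p0 v : Fin n → ℝ), IsOpen {t : ℝ | ∀ i, 0 < p0 i + t * v i} := by
    intro p0 v
    have : {t : ℝ | ∀ i, 0 < p0 i + t * v i}
        = ⋂ i, (fun t : ℝ => p0 i + t * v i) ⁻¹' Ioi 0 := by ext t; simp
    rw [this]
    exact isOpen_iInter_of_finite fun i =>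
      ((continuous_const.add (continuous_id.mul continuous_const)).isOpen_preimage _ isOpen_Ioi)
  constructor
  · -- concave → PSD
    intro hconc x hx b
    have hx' : ∀ i, 0 < x i := by rwa [hΓ] at hx
    set p0 : Fin n → ℝ := fun i => (x i)⁻¹ with hp0
    set v : Fin n → ℝ := fun i => -(b i) / (x i)^2 with hv
    set D : Set ℝ := {t | ∀ i, 0 < p0 i + t * v i} with hD
    have hDo : IsOpen D := hDopen p0 v
    have h0D : (0:ℝ) ∈ D := by
      intro i; simpa [hp0] using inv_pos.2 (hx' i)
    have hφconc : ConcaveOn ℝ D (fun t => (f (lineC p0 v t))⁻¹) := by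
      have h := hconc.comp_affineMap (AffineMap.lineMap p0 (p0 + v) : ℝ →ᵃ[ℝ] (Fin n → ℝ))
      rw [← hDpre p0 v] at h
      convert h using 1 <;> try rfl
      funext t
      simp only [Function.comp_apply, hlineMap p0 v t]
      rfl
    have hder : ∀ t ∈ D, HasDerivAt (fun s => (f (lineC p0 v s))⁻¹) (lineP1 f p0 v t) t :=
      fun t htD => hasDerivAt_phi hΓ hΓo hsmooth hpos htD
    have hanti : AntitoneOn (lineP1 f p0 v) D := by
      have h := hφconc.antitoneOn_deriv (fun t htD => (hder t htD).differentiableAt)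
      intro s hs t htD hst
      rw [← (hder s hs).deriv, ← (hder t htD).deriv]
      exact h hs htD hst
    have hP2 : lineP2 f p0 v 0 ≤ 0 :=
      deriv_nonpos_of_antitoneOn (hDo.mem_nhds h0D) hanti
        (hasDerivAt_phi1 hΓ hΓo hsmooth hpos h0D)
    have hc0 : lineC p0 v 0 = x := by
      funext i; simp [lineC, hp0]
    have hd0 : lineD p0 v 0 = b := by
      funext i
      have h1 : x i ≠ 0 := (hx' i).ne'
      simp only [lineD, hv, hp0, zero_mul, add_zero]
      field_simp
    have hQ0 := lineQ_eq (f := f) (x := p0) (v := v) (t := 0) h0D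
    rw [hc0, hd0] at hQ0
    have hQnn : 0 ≤ lineQ f p0 v 0 := by
      have hG : 0 < f (lineC p0 v 0) := by rw [hc0]; exact hpos x hx
      have h2 : 0 ≤ 2 * (lineS f p0 v 0)^2 / (f (lineC p0 v 0))^3 := by positivity
      unfold lineP2 at hP2
      have h3 : 0 ≤ lineQ f p0 v 0 / (f (lineC p0 v 0))^2 := by linarith
      have hGne : f (lineC p0 v 0) ≠ 0 := ne_of_gt hG
      calc (0:ℝ) ≤ lineQ f p0 v 0 / (f (lineC p0 v 0))^2 * (f (lineC p0 v 0))^2 :=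
            mul_nonneg h3 (by positivity)
        _ = lineQ f p0 v 0 := by field_simp
    rw [hQ0] at hQnn
    exact hQnn
  · -- PSD → concave
    intro hpsd
    have hpsd' : ∀ y ∈ Γ, ∀ bb : Fin n → ℝ,
        0 ≤ ∑ i, ∑ j, (Md f i j y + if i = j then 2 / y i * Fd f i y else 0) * bb i * bb j :=
      hpsd
    refine ⟨hΓc, ?_⟩
    intro a ha b' hb' μ ν hμ hν hμν
    have ha' : ∀ i, 0 < a i := by rwa [hΓ] at ha
    have hb'' : ∀ i, 0 < b' i := by rwa [hΓ] at hb'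
    set v : Fin n → ℝ := fun i => b' i - a i with hv
    set D : Set ℝ := {t | ∀ i, 0 < a i + t * v i} with hD
    have hDo : IsOpen D := hDopen a v
    have hDc : Convex ℝ D := by
      rw [hD, hDpre a v]
      exact hΓc.affine_preimage _
    have hP2le : ∀ t ∈ D, lineP2 f a v t ≤ 0 := by
      intro t htD
      have hyΓ : lineC a v t ∈ Γ := lineC_mem hΓ htD
      have hGy : 0 < f (lineC a v t) := hpos _ hyΓ
      have hyne : ∀ i, lineC a v t i ≠ 0 := fun i => ne_of_gt (inv_pos.2 (htD i))
      have hkey := key_ineq (lineC a v t) (fun i => Fd f i (lineC a v t)) (lineD a v t)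
        (fun i j => Md f i j (lineC a v t)) (f (lineC a v t)) hGy hyne
        (euler1 hΓ hΓo hsmooth hhom hyΓ)
        (fun i => euler2 hΓ hΓo hsmooth hhom hyΓ i)
        (fun i j => Md_symm hΓo hsmooth hyΓ i j)
        (hpsd' _ hyΓ)
      rw [← lineQ_eq htD] at hkey
      have hSL : ∑ i, Fd f i (lineC a v t) * lineD a v t i = lineS f a v t :=
        Finset.sum_congr rfl fun i _ => mul_comm _ _
      rw [hSL] at hkey
      have hGne : f (lineC a v t) ≠ 0 := ne_of_gt hGy
      have h5 : 2 * (lineS f a v t)^2 / (f (lineC a v t)) / (f (lineC a v t))^2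
          ≤ lineQ f a v t / (f (lineC a v t))^2 :=
        div_le_div_of_nonneg_right hkey (by positivity) |>.trans_eq rfl
      have h6 : 2 * (lineS f a v t)^2 / (f (lineC a v t)) / (f (lineC a v t))^2
          = 2 * (lineS f a v t)^2 / (f (lineC a v t))^3 := by
        ring
      unfold lineP2
      linarith [h6 ▸ h5]
    have hφconc : ConcaveOn ℝ D (fun s => (f (lineC a v s))⁻¹) := by
      apply concaveOn_of_hasDerivWithinAt2_nonpos hDc
        (f' := lineP1 f a v) (f'' := lineP2 f a v)
      · intro t htD
        exact ((hasDerivAt_phi hΓ hΓo hsmooth hpos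
          htD).differentiableAt.continuousAt).continuousWithinAt
      · rw [hDo.interior_eq]
        exact fun t htD => (hasDerivAt_phi hΓ hΓo hsmooth hpos htD).hasDerivWithinAt
      · rw [hDo.interior_eq]
        exact fun t htD => (hasDerivAt_phi1 hΓ hΓo hsmooth hpos htD).hasDerivWithinAt
      · rw [hDo.interior_eq]
        exact hP2le
    have h0D : (0:ℝ) ∈ D := by intro i; simpa using ha' i
    have h1D : (1:ℝ) ∈ D := by intro i; simpa [hv] using hb'' i
    have hcomb := hφconc.2 h0D h1D hμ hν hμν
    simp only [smul_eq_mul, mul_zero, mul_one, zero_add] at hcomb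
    have e0 : lineC a v 0 = fun i => (a i)⁻¹ := by funext i; simp [lineC]
    have e1 : lineC a v 1 = fun i => (b' i)⁻¹ := by funext i; simp [lineC, hv]
    have eν : lineC a v ν = fun i => ((μ • a + ν • b') i)⁻¹ := by
      funext i
      have hμ1 : μ = 1 - ν := by linarith
      simp only [lineC, hv, hμ1, Pi.add_apply, Pi.smul_apply, smul_eq_mul]
      congr 1
      ring
    rw [e0, e1, eν] at hcomb
    simpa using hcomb
end

section
/- If f is smooth, symmetric, strictly monotone, homogeneous of degree one, positive on Γ₊ with f(1,...,1) = 1, and f is concave on Γ₊, then ∑ᵢ ∂f/∂κᵢ ≥ 1 at every point of Γ₊. -/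
open Set

/-- If `f` satisfies Conditions 1 and is concave on `Γ₊`, then `∑ᵢ ∂f/∂κᵢ ≥ 1` on `Γ₊`. -/
theorem sum_of_derivatives_ge_one (n : ℕ)
    (f : (Fin n → ℝ) → ℝ) (Γ : Set (Fin n → ℝ)) (hΓ : Γ = {κ | ∀ i, 0 < κ i})
    (hsmooth : ContDiffOn ℝ (⊤ : ℕ∞) f Γ)
    (hsym : ∀ σ : Equiv.Perm (Fin n), ∀ κ ∈ Γ, f (κ ∘ σ) = f κ)
    (hmono : ∀ κ ∈ Γ, ∀ i, 0 < fderiv ℝ f κ (Pi.single i 1))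
    (hhom : ∀ κ ∈ Γ, ∀ lam : ℝ, 0 < lam → f (lam • κ) = lam * f κ)
    (hpos : ∀ κ ∈ Γ, 0 < f κ)
    (hnorm : f 1 = 1)
    (hconc : ConcaveOn ℝ Γ f)
    (κ : Fin n → ℝ) (hκ : κ ∈ Γ) :
    1 ≤ ∑ i, fderiv ℝ f κ (Pi.single i 1) := by
  -- dispose of n = 0
  rcases Nat.eq_zero_or_pos n with hn | hn
  · exfalso
    have h2 : f ((2:ℝ) • κ) = 2 * f κ := hhom κ hκ 2 (by norm_num)
    have hsk : (2:ℝ) • κ = κ := by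
      funext i; exact absurd (i.2.trans_le (by omega)) (lt_irrefl _)
    rw [hsk] at h2
    have := hpos κ hκ
    nlinarith
  -- Γ is open
  have hopen : IsOpen Γ := by
    rw [hΓ]
    have : {κ : Fin n → ℝ | ∀ i, 0 < κ i} = ⋂ i, (fun κ : Fin n → ℝ => κ i) ⁻¹' Ioi 0 := by
      ext x; simp
    rw [this]
    exact isOpen_iInter_of_finite fun i => (continuous_apply i).isOpen_preimage _ isOpen_Ioi
  have hdiff : DifferentiableAt ℝ f κ :=
    (hsmooth.contDiffAt (hopen.mem_nhds hκ)).differentiableAt (by simp)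
  set F := fderiv ℝ f κ with hF
  have hFd : HasFDerivAt f F κ := hdiff.hasFDerivAt
  -- Euler: F κ = f κ
  have heuler : F κ = f κ := by
    have hline : HasDerivAt (fun t : ℝ => t • κ) κ 1 := by
      simpa using (hasDerivAt_id (1:ℝ)).smul_const κ
    have hd1 : HasDerivAt (fun t : ℝ => f (t • κ)) (F κ) 1 := by
      have hFd' : HasFDerivAt f F ((1:ℝ) • κ) := by rwa [one_smul]
      exact hFd'.comp_hasDerivAt (x := (1:ℝ)) hline
    have hd2 : HasDerivAt (fun t : ℝ => t * f κ) (f κ) 1 := by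
      simpa using (hasDerivAt_id (1:ℝ)).mul_const (f κ)
    have hev : (fun t : ℝ => f (t • κ)) =ᶠ[nhds 1] (fun t : ℝ => t * f κ) := by
      filter_upwards [Ioi_mem_nhds (by norm_num : (0:ℝ) < 1)] with t ht
      exact hhom κ hκ t ht
    exact (hd1.congr_of_eventuallyEq hev.symm).unique hd2
  -- 1 ∈ Γ
  have h1Γ : (1 : Fin n → ℝ) ∈ Γ := by rw [hΓ]; intro i; norm_num
  -- sum of partials equals F 1
  have hsum : ∑ i, F (Pi.single i 1) = F 1 := by
    rw [← map_sum]
    congr 1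
    exact Finset.univ_sum_single (fun _ => (1:ℝ))
  -- concavity along the segment from κ to 1
  set L : ℝ →ᵃ[ℝ] (Fin n → ℝ) := AffineMap.lineMap κ (1 : Fin n → ℝ) with hL
  have hgc : ConcaveOn ℝ (L ⁻¹' Γ) (f ∘ L) := hconc.comp_affineMap L
  have h0 : (0:ℝ) ∈ L ⁻¹' Γ := by
    simp [hL, AffineMap.lineMap_apply, hκ]
  have h1 : (1:ℝ) ∈ L ⁻¹' Γ := by
    simp [hL, AffineMap.lineMap_apply, h1Γ]
  have hgd : HasDerivAt (f ∘ L) (F ((1 : Fin n → ℝ) - κ)) 0 := by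
    have hld : HasDerivAt (fun t : ℝ => L t) ((1 : Fin n → ℝ) - κ) 0 := by
      have : HasDerivAt (fun t : ℝ => κ + t • ((1 : Fin n → ℝ) - κ))
          ((1 : Fin n → ℝ) - κ) 0 := by
        simpa using ((hasDerivAt_id (0:ℝ)).smul_const ((1 : Fin n → ℝ) - κ)).const_add κ
      simpa [hL, AffineMap.lineMap_apply, vsub_eq_sub, vadd_eq_add, add_comm] using this
    have hFd' : HasFDerivAt f F (L 0) := by
      rwa [show L 0 = κ by simp [hL]]
    exact hFd'.comp_hasDerivAt (x := (0:ℝ)) hld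
  have hslope := hgc.slope_le_of_hasDerivAt h0 h1 (by norm_num) hgd
  have hsl : slope (f ∘ L) 0 1 = 1 - f κ := by
    simp [slope, hL, AffineMap.lineMap_apply, hnorm]
  rw [hsl] at hslope
  have hFsub : F ((1 : Fin n → ℝ) - κ) = F 1 - F κ := by
    rw [map_sub]
  rw [hFsub, heuler] at hslope
  rw [hsum]
  linarith
end

section
/- If f is smooth, symmetric, strictly monotone, homogeneous of degree one, positive on Γ₊ with f(1,...,1) = 1, and f is inverse-concave (f_* is concave), then ∑ᵢ (∂f/∂κᵢ) κᵢ² ≥ f(κ)² at every point κ ∈ Γ₊. -/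
open Set Filter

/-- If `f` satisfies Conditions 1 and is inverse-concave (`f_*` concave), then
`∑ᵢ (∂f/∂κᵢ) κᵢ² ≥ f(κ)²` on `Γ₊`. -/
theorem inverse_concave_sum_bound (n : ℕ)
    (f : (Fin n → ℝ) → ℝ) (Γ : Set (Fin n → ℝ)) (hΓ : Γ = {κ | ∀ i, 0 < κ i})
    (hsmooth : ContDiffOn ℝ (⊤ : ℕ∞) f Γ)
    (hsym : ∀ σ : Equiv.Perm (Fin n), ∀ κ ∈ Γ, f (κ ∘ σ) = f κ)
    (hmono : ∀ κ ∈ Γ, ∀ i, 0 < fderiv ℝ f κ (Pi.single i 1))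
    (hhom : ∀ κ ∈ Γ, ∀ lam : ℝ, 0 < lam → f (lam • κ) = lam * f κ)
    (hpos : ∀ κ ∈ Γ, 0 < f κ)
    (hnorm : f 1 = 1)
    (hinvconc : ConcaveOn ℝ Γ (fun x => (f (fun i => (x i)⁻¹))⁻¹))
    (κ : Fin n → ℝ) (hκ : κ ∈ Γ) :
    (f κ) ^ 2 ≤ ∑ i, fderiv ℝ f κ (Pi.single i 1) * (κ i) ^ 2 := by
  have hopen : IsOpen Γ := by
    have : Γ = Set.pi univ (fun _ : Fin n => Ioi (0:ℝ)) := by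
      rw [hΓ]; ext x; simp [Set.mem_pi]
    rw [this]; exact isOpen_set_pi finite_univ (fun i _ => isOpen_Ioi)
  have hκi : ∀ i, 0 < κ i := by rw [hΓ] at hκ; exact hκ
  set F := f κ with hF
  set S := ∑ i, fderiv ℝ f κ (Pi.single i 1) * (κ i) ^ 2 with hS
  have hFpos : 0 < F := hpos κ hκ
  -- differentiability
  have hdiff : ∀ x ∈ Γ, HasFDerivAt f (fderiv ℝ f x) x := fun x hx =>
    ((hsmooth.contDiffAt (hopen.mem_nhds hx)).differentiableAt (by simp)).hasFDerivAt
  -- linearity of the derivative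
  have hlin : ∀ v : Fin n → ℝ,
      fderiv ℝ f κ v = ∑ i, v i * fderiv ℝ f κ (Pi.single i 1) := by
    intro v
    have hv : v = ∑ i, v i • (Pi.single i 1 : Fin n → ℝ) := by
      ext j
      simp [Finset.sum_apply, Pi.single_apply]
    conv_lhs => rw [hv]
    rw [map_sum]
    simp [smul_eq_mul]
  -- Euler's identity
  have heuler : fderiv ℝ f κ κ = F := by
    have hline : HasDerivAt (fun t : ℝ => t • κ) κ 1 := by
      simpa using (hasDerivAt_id (1:ℝ)).smul_const κ
    have h1 : HasDerivAt (fun t : ℝ => f (t • κ)) (fderiv ℝ f κ κ) 1 :=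
      (hdiff κ hκ).comp_hasDerivAt_of_eq 1 hline (one_smul ℝ κ).symm
    have h2 : HasDerivAt (fun t : ℝ => t * F) F 1 := by
      simpa using (hasDerivAt_id (1:ℝ)).mul_const F
    have hev : (fun t : ℝ => f (t • κ)) =ᶠ[nhds (1:ℝ)] fun t => t * F := by
      filter_upwards [Ioi_mem_nhds (show (0:ℝ) < 1 by norm_num)] with t ht
      exact hhom κ hκ t ht
    exact h1.unique (h2.congr_of_eventuallyEq hev)
  have hκsum : ∑ i, κ i * fderiv ℝ f κ (Pi.single i 1) = F := by
    rw [← hlin κ, heuler]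
  -- the point x₀ = κ⁻¹ and the curve
  set x₀ : Fin n → ℝ := fun i => (κ i)⁻¹ with hx₀def
  have hx₀pos : ∀ i, 0 < x₀ i := fun i => inv_pos.2 (hκi i)
  have hx₀ : x₀ ∈ Γ := by rw [hΓ]; exact hx₀pos
  set w : Fin n → ℝ := fun i => κ i - κ i ^ 2 with hwdef
  set c : ℝ → (Fin n → ℝ) := fun t => fun i => (x₀ i + t * (1 - x₀ i))⁻¹ with hcdef
  set φ : ℝ → ℝ := fun t => (f (c t))⁻¹ with hφdef
  have hc0 : c 0 = κ := by
    funext i; simp [hcdef, hx₀def]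
  -- derivative of c at 0
  have hc : HasDerivAt c w 0 := by
    rw [hasDerivAt_pi]
    intro i
    have hin : HasDerivAt (fun t : ℝ => x₀ i + t * (1 - x₀ i)) (1 - x₀ i) 0 := by
      simpa using ((hasDerivAt_id (0:ℝ)).mul_const (1 - x₀ i)).const_add (x₀ i)
    have hne : x₀ i + 0 * (1 - x₀ i) ≠ 0 := by
      simpa using (hx₀pos i).ne'
    have := hin.inv hne
    have harith : -(1 - x₀ i) / (x₀ i + 0 * (1 - x₀ i)) ^ 2 = w i := by
      have : κ i ≠ 0 := (hκi i).ne'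
      simp only [hwdef, hx₀def]; field_simp
      ring
    rwa [harith] at this
  have hfc : HasDerivAt (fun t => f (c t)) (fderiv ℝ f κ w) 0 :=
    (hdiff κ hκ).comp_hasDerivAt_of_eq 0 hc hc0.symm
  have hfc0 : f (c 0) = F := by rw [hc0]
  have hφ' : HasDerivAt φ (-(fderiv ℝ f κ w) / F ^ 2) 0 := by
    have := hfc.inv (by rw [hfc0]; exact hFpos.ne')
    rwa [hfc0] at this
  -- value of the derivative
  have hw : fderiv ℝ f κ w = F - S := by
    calc fderiv ℝ f κ w = ∑ i, w i * fderiv ℝ f κ (Pi.single i 1) := hlin w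
      _ = (∑ i, κ i * fderiv ℝ f κ (Pi.single i 1))
            - ∑ i, fderiv ℝ f κ (Pi.single i 1) * κ i ^ 2 := by
          rw [← Finset.sum_sub_distrib]
          exact Finset.sum_congr rfl (by intros; simp [hwdef]; ring)
      _ = F - S := by rw [hκsum]
  -- concavity of φ on [0,1]
  have hφconc : ConcaveOn ℝ (Icc (0:ℝ) 1) φ := by
    have hA := hinvconc.comp_affineMap (AffineMap.lineMap x₀ (1 : Fin n → ℝ))
    have hfun : ((fun x => (f (fun i => (x i)⁻¹))⁻¹) ∘
        (AffineMap.lineMap x₀ (1 : Fin n → ℝ))) = φ := by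
      funext t
      simp only [Function.comp_apply, hφdef, hcdef]
      congr 1
      apply congrArg f
      funext i
      congr 1
      simp [AffineMap.lineMap_apply]
      ring
    rw [hfun] at hA
    refine hA.subset (fun t ht => ?_) (convex_Icc 0 1)
    simp only [Set.mem_preimage, hΓ, Set.mem_setOf_eq]
    intro i
    have hv : (AffineMap.lineMap x₀ (1 : Fin n → ℝ)) t i = x₀ i + t * (1 - x₀ i) := by
      simp [AffineMap.lineMap_apply]; ring
    rw [hv]
    have h1t : 0 ≤ (1 - t) * x₀ i := mul_nonneg (by linarith [ht.2]) (hx₀pos i).le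
    rcases ht.1.eq_or_lt with h | h
    · rw [← h]; simpa using hx₀pos i
    · nlinarith [hx₀pos i]
  -- φ values
  have hφ0 : φ 0 = F⁻¹ := by show (f (c 0))⁻¹ = F⁻¹; rw [hfc0]
  have hφ1 : φ 1 = 1 := by
    have : c 1 = 1 := by
      funext i; simp [hcdef]
    simp [hφdef, this, hnorm]
  -- concavity gives the slope bound
  have key : φ 1 - φ 0 ≤ -(fderiv ℝ f κ w) / F ^ 2 := by
    have hslope : Tendsto (slope φ 0) (nhdsWithin 0 (Ioi 0))
        (nhds (-(fderiv ℝ f κ w) / F ^ 2)) :=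
      (hasDerivAt_iff_tendsto_slope.1 hφ').mono_left
        (nhdsWithin_mono _ (fun x hx => ne_of_gt hx))
    refine ge_of_tendsto hslope ?_
    filter_upwards [Ioo_mem_nhdsGT one_pos] with t ht
    have hsl := hφconc.slope_anti_adjacent (left_mem_Icc.2 zero_le_one)
      (right_mem_Icc.2 zero_le_one) ht.1 ht.2
    rw [slope_def_field]
    have h1t : (0:ℝ) < 1 - t := by linarith [ht.2]
    have h2 : φ 1 - φ t ≤ (1 - t) * ((φ t - φ 0) / (t - 0)) := by
      rw [← div_le_iff₀' h1t]
      simpa using hsl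
    have ht0 : t ≠ 0 := ht.1.ne'
    have h3 : φ t - φ 0 = t * ((φ t - φ 0) / (t - 0)) := by
      field_simp; ring
    linarith
  -- finish
  rw [hφ1, hφ0, hw] at key
  have key2 : (1 - F⁻¹) * F ^ 2 ≤ -(F - S) := by
    have := mul_le_mul_of_nonneg_right key (sq_nonneg F)
    rwa [div_mul_cancel₀ _ (pow_pos hFpos 2).ne'] at this
  have hexp : (1 - F⁻¹) * F ^ 2 = F ^ 2 - F := by
    field_simp
  linarith [hexp ▸ key2]
end

section
/- If f is a smooth symmetric function on Γ₊ that is inverse-concave (f_* concave), then for any i ≠ j and any point x ∈ Γ₊ one has ((∂f/∂xᵢ) xᵢ² - (∂f/∂xⱼ) xⱼ²)(xᵢ - xⱼ) ≥ 0. -/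
open Set

/-- For an inverse-concave function `f` on `Γ₊`, one has
`((∂f/∂xᵢ) xᵢ² - (∂f/∂xⱼ) xⱼ²)(xᵢ - xⱼ) ≥ 0` for all `i ≠ j`. -/
theorem inverse_concave_derivative_ordering (n : ℕ)
    (f : (Fin n → ℝ) → ℝ) (Γ : Set (Fin n → ℝ)) (hΓ : Γ = {x | ∀ i, 0 < x i})
    (hsmooth : ContDiffOn ℝ (⊤ : ℕ∞) f Γ)
    (hsym : ∀ σ : Equiv.Perm (Fin n), ∀ x ∈ Γ, f (x ∘ σ) = f x)
    (hmono : ∀ x ∈ Γ, ∀ i, 0 < fderiv ℝ f x (Pi.single i 1))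
    (hhom : ∀ x ∈ Γ, ∀ lam : ℝ, 0 < lam → f (lam • x) = lam * f x)
    (hpos : ∀ x ∈ Γ, 0 < f x)
    (hinvconc : ConcaveOn ℝ Γ (fun x => (f (fun i => (x i)⁻¹))⁻¹))
    (x : Fin n → ℝ) (hx : x ∈ Γ) (i j : Fin n) (hij : i ≠ j) :
    0 ≤ (fderiv ℝ f x (Pi.single i 1) * (x i) ^ 2
          - fderiv ℝ f x (Pi.single j 1) * (x j) ^ 2) * (x i - x j) := by
  subst hΓ
  have hxpos : ∀ k, 0 < x k := hx
  have hopen : IsOpen {x : Fin n → ℝ | ∀ i, 0 < x i} := by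
    have h : {x : Fin n → ℝ | ∀ i, 0 < x i} = ⋂ k, (fun z : Fin n → ℝ => z k) ⁻¹' Ioi 0 := by
      ext z; simp [mem_iInter]
    rw [h]
    exact isOpen_iInter_of_finite fun k => isOpen_Ioi.preimage (continuous_apply k)
  have hdf : DifferentiableAt ℝ f x :=
    (hsmooth.contDiffAt (hopen.mem_nhds hx)).differentiableAt (by simp)
  set Df := fderiv ℝ f x with hDf
  have hf' : HasFDerivAt f Df x := hdf.hasFDerivAt
  set σ : Equiv.Perm (Fin n) := Equiv.swap i j with hσ
  set y : Fin n → ℝ := fun k => (x k)⁻¹ with hy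
  have hypos : ∀ k, 0 < y k := fun k => inv_pos.2 (hxpos k)
  set z : Fin n → ℝ := fun k => y (σ k) with hz
  set d : Fin n → ℝ := fun k => z k - y k with hd
  have hyΓ : y ∈ {x : Fin n → ℝ | ∀ i, 0 < x i} := hypos
  have hzΓ : z ∈ {x : Fin n → ℝ | ∀ i, 0 < x i} := fun k => hypos (σ k)
  -- the function along the segment
  set ψ : ℝ → (Fin n → ℝ) := fun t => fun k => (y k + t * d k)⁻¹ with hψdef
  have hψ0 : ψ 0 = x := by funext k; simp [hψdef, hy]
  set v : Fin n → ℝ := fun k => -((y k) ^ 2)⁻¹ * d k with hv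
  have hψ : HasDerivAt ψ v 0 := by
    rw [hasDerivAt_pi]
    intro k
    have h1 : HasDerivAt (fun t : ℝ => y k + t * d k) (d k) 0 :=
      (hasDerivAt_mul_const (d k)).const_add (y k)
    have h0 : y k + 0 * d k = y k := by ring
    have h2 : HasDerivAt (fun s : ℝ => s⁻¹) (-((y k) ^ 2)⁻¹) (y k + 0 * d k) := by
      rw [h0]; exact hasDerivAt_inv (hypos k).ne'
    have := h2.comp 0 h1
    simpa [hv, Function.comp_def, hψdef] using this
  have hfx : 0 < f x := hpos x hx
  have hfψ : HasDerivAt (fun t => f (ψ t)) (Df v) 0 := by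
    have hf'' : HasFDerivAt f Df (ψ 0) := by rw [hψ0]; exact hf'
    exact hf''.comp_hasDerivAt 0 hψ
  have hφ : HasDerivAt (fun t => (f (ψ t))⁻¹) (-((f x) ^ 2)⁻¹ * Df v) 0 := by
    have h2 : HasDerivAt (fun s : ℝ => s⁻¹) (-((f x) ^ 2)⁻¹) (f (ψ 0)) := by
      rw [hψ0]; exact hasDerivAt_inv hfx.ne'
    have := h2.comp 0 hfψ
    simpa [Function.comp_def] using this
  -- symmetry: value at the two endpoints agree
  have hyx : (fun k => (y k)⁻¹) = x := funext fun k => by simp [hy]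
  have hzx : (fun k => (z k)⁻¹) = x ∘ σ := funext fun k => by simp [hz, hy, Function.comp]
  have hgz : f (fun k => (z k)⁻¹) = f (fun k => (y k)⁻¹) := by
    rw [hyx, hzx]; exact hsym σ x hx
  -- concavity gives monotonicity along the segment
  have hmid : ∀ t ∈ Ioc (0:ℝ) 1, (f (ψ 0))⁻¹ ≤ (f (ψ t))⁻¹ := by
    intro t ht
    have hcon := hinvconc.2 hyΓ hzΓ (sub_nonneg.2 ht.2) ht.1.le (by ring)
    have harg : (1 - t) • y + t • z = fun k => y k + t * d k := by
      funext k
      simp only [Pi.add_apply, Pi.smul_apply, smul_eq_mul, hd]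
      ring
    have h1 : (fun k => (((1 - t) • y + t • z) k)⁻¹) = ψ t := by
      rw [harg]
    simp only [h1] at hcon
    have h2 : f (ψ 0) = f (fun k => (y k)⁻¹) := by rw [hψ0, hyx]
    calc (f (ψ 0))⁻¹ = (1 - t) * (f (fun k => (y k)⁻¹))⁻¹ + t * (f (fun k => (z k)⁻¹))⁻¹ := by
          rw [hgz, h2]; ring
      _ ≤ (f (ψ t))⁻¹ := by simpa [smul_eq_mul] using hcon
  -- hence the derivative at 0 is nonnegative
  have hkey : 0 ≤ -((f x) ^ 2)⁻¹ * Df v := by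
    have hslope := hasDerivAt_iff_tendsto_slope.mp hφ
    have h2 : Filter.Tendsto (slope (fun t => (f (ψ t))⁻¹) 0) (nhdsWithin 0 (Ioi 0))
        (nhds (-((f x) ^ 2)⁻¹ * Df v)) :=
      hslope.mono_left (nhdsWithin_mono 0 fun t ht => ne_of_gt ht)
    refine ge_of_tendsto h2 ?_
    filter_upwards [Ioc_mem_nhdsGT_of_mem (left_mem_Ico.2 one_pos)] with t ht
    have hle := hmid t ht
    have hnn : 0 ≤ (f (ψ t))⁻¹ - (f (ψ 0))⁻¹ := sub_nonneg.2 hle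
    have hslope_eq : slope (fun t => (f (ψ t))⁻¹) 0 t = ((f (ψ t))⁻¹ - (f (ψ 0))⁻¹) / t := by
      simp [slope_def_field]
    rw [hslope_eq]
    exact div_nonneg hnn ht.1.le
  -- decompose v
  have hvdecomp : v = (-((y i) ^ 2)⁻¹ * d i) • (Pi.single i 1 : Fin n → ℝ)
      + (-((y j) ^ 2)⁻¹ * d j) • (Pi.single j 1 : Fin n → ℝ) := by
    funext k
    by_cases hki : k = i
    · subst hki
      simp [hv, Pi.single_apply, hij, Ne.symm hij]
    · by_cases hkj : k = j
      · subst hkj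
        simp [hv, Pi.single_apply, hij, Ne.symm hij]
      · have hfix : σ k = k := Equiv.swap_apply_of_ne_of_ne hki hkj
        simp [hv, hd, hz, hfix, Pi.single_apply, hki, hkj]
  have hDfv : Df v = (-((y i) ^ 2)⁻¹ * d i) * Df (Pi.single i 1)
      + (-((y j) ^ 2)⁻¹ * d j) * Df (Pi.single j 1) := by
    rw [hvdecomp]
    simp [map_add, ContinuousLinearMap.map_smul, smul_eq_mul]
  set A := Df (Pi.single i (1:ℝ)) with hA
  set B := Df (Pi.single j (1:ℝ)) with hB
  have hc : 0 < ((f x) ^ 2)⁻¹ := inv_pos.2 (pow_pos hfx 2)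
  have hS : (-((y i) ^ 2)⁻¹ * d i) * A + (-((y j) ^ 2)⁻¹ * d j) * B ≤ 0 := by
    rw [hDfv] at hkey
    by_contra hcon
    push_neg at hcon
    nlinarith [mul_pos hc hcon]
  -- rewrite in terms of x
  have hyi2 : ((y i) ^ 2)⁻¹ = (x i) ^ 2 := by simp [hy]
  have hyj2 : ((y j) ^ 2)⁻¹ = (x j) ^ 2 := by simp [hy]
  have hdi : d i = (x j)⁻¹ - (x i)⁻¹ := by simp [hd, hz, hy, hσ, Equiv.swap_apply_left]
  have hdj : d j = (x i)⁻¹ - (x j)⁻¹ := by simp [hd, hz, hy, hσ, Equiv.swap_apply_right]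
  rw [hyi2, hyj2, hdi, hdj] at hS
  have key2 : 0 ≤ ((x j)⁻¹ - (x i)⁻¹) * ((x i) ^ 2 * A - (x j) ^ 2 * B) := by
    nlinarith [hS]
  have hmul : 0 ≤ (((x j)⁻¹ - (x i)⁻¹) * ((x i) ^ 2 * A - (x j) ^ 2 * B)) * (x i * x j) :=
    mul_nonneg key2 (mul_pos (hxpos i) (hxpos j)).le
  have hi0 : x i ≠ 0 := (hxpos i).ne'
  have hj0 : x j ≠ 0 := (hxpos j).ne'
  have hident : (((x j)⁻¹ - (x i)⁻¹) * ((x i) ^ 2 * A - (x j) ^ 2 * B)) * (x i * x j)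
      = (A * (x i) ^ 2 - B * (x j) ^ 2) * (x i - x j) := by
    field_simp
  linarith [hident ▸ hmul]
end

section
/- Let f satisfy Conditions 1 on Γ₊ ⊂ ℝⁿ (n ≥ 2) and suppose f is positive on the face {x₁ = 0, x₂,...,xₙ > 0} (extended continuously). If the restriction f̃(x₂,...,xₙ) = f(0, x₂,...,xₙ) is inverse-concave on Γ₊^{(n-1)}, then for each 0 < k < n-1, the restriction of f to the k-dimensional face, f̃ₖ(x₁,...,xₖ) = f(x₁,...,xₖ,0,...,0), is inverse-concave on Γ₊^{(k)} whenever it is not identically zero. -/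
open Set

/-- Padding a vector of length `k` by zeros to a vector of length `n`. -/
def pad (n k : ℕ) (x : Fin k → ℝ) : Fin n → ℝ :=
  fun i => if h : (i : ℕ) < k then x ⟨i, h⟩ else 0

open Filter Topology

private lemma comb_pos {a b u v : ℝ} (ha : 0 ≤ a) (hb : 0 ≤ b) (hab : a + b = 1)
    (hu : 0 < u) (hv : 0 < v) : 0 < a * u + b * v := by
  rcases ha.lt_or_eq with h | h
  · exact add_pos_of_pos_of_nonneg (mul_pos h hu) (mul_nonneg hb hv.le)
  · have hb1 : b = 1 := by linarith
    rw [← h, hb1]; simpa using hv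

/-- Extension of a vector of length `k` to length `m` by the constant `t`. -/
def extC (k m : ℕ) (t : ℝ) (x : Fin k → ℝ) : Fin m → ℝ :=
  fun j => if h : (j : ℕ) < k then x ⟨j, h⟩ else t

/-- If the restriction of `f` to the `(n-1)`-dimensional boundary face is positive and
inverse-concave, then the restriction of `f` to each lower-dimensional face is
inverse-concave whenever it is not identically zero. -/
theorem face_restriction_inverse_concave (n : ℕ) (hn : 2 ≤ n)
    (f g : (Fin n → ℝ) → ℝ) (Γ : Set (Fin n → ℝ)) (hΓ : Γ = {x | ∀ i, 0 < x i})
    (hsmooth : ContDiffOn ℝ (⊤ : ℕ∞) f Γ)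
    (hsym : ∀ σ : Equiv.Perm (Fin n), ∀ x ∈ Γ, f (x ∘ σ) = f x)
    (hmono : ∀ x ∈ Γ, ∀ (i : Fin n) (s t : ℝ), 0 < s → s < t →
      f (Function.update x i s) < f (Function.update x i t))
    (hhom : ∀ x ∈ Γ, ∀ lam : ℝ, 0 < lam → f (lam • x) = lam * f x)
    (hpos : ∀ x ∈ Γ, 0 < f x)
    (hnorm : f 1 = 1)
    (hg : ContinuousOn g (closure Γ)) (hgf : ∀ x ∈ Γ, g x = f x)
    (hfacepos : ∀ x : Fin (n - 1) → ℝ, (∀ i, 0 < x i) → 0 < g (pad n (n - 1) x))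
    (hfaceIC : ConcaveOn ℝ {x : Fin (n - 1) → ℝ | ∀ i, 0 < x i}
      (fun x => (g (pad n (n - 1) (fun i => (x i)⁻¹)))⁻¹))
    (k : ℕ) (hk0 : 0 < k) (hkn : k < n - 1)
    (hnz : ∃ x : Fin k → ℝ, (∀ i, 0 < x i) ∧ g (pad n k x) ≠ 0) :
    ConcaveOn ℝ {x : Fin k → ℝ | ∀ i, 0 < x i}
      (fun x => (g (pad n k (fun i => (x i)⁻¹)))⁻¹) := by
  subst hΓ
  set Γ : Set (Fin n → ℝ) := {x | ∀ i, 0 < x i} with hΓ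
  -- approximation sequence
  have happrox : ∀ z : Fin n → ℝ,
      Tendsto (fun m : ℕ => z + ((m : ℝ) + 1)⁻¹ • (1 : Fin n → ℝ)) atTop (𝓝 z) := by
    intro z
    have h0 : Tendsto (fun m : ℕ => ((m : ℝ) + 1)⁻¹) atTop (𝓝 0) := by
      simpa [one_div] using tendsto_one_div_add_atTop_nhds_zero_nat (𝕜 := ℝ)
    have h1 := h0.smul_const (1 : Fin n → ℝ)
    simpa using tendsto_const_nhds.add h1
  have hcl : ∀ z : Fin n → ℝ, (∀ i, 0 ≤ z i) → z ∈ closure Γ := by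
    intro z hz
    refine mem_closure_of_tendsto (happrox z) (Eventually.of_forall fun m => fun i => ?_)
    have hε : (0 : ℝ) < ((m : ℝ) + 1)⁻¹ := by positivity
    simpa using add_pos_of_nonneg_of_pos (hz i) hε
  -- monotonicity of f with respect to the componentwise order
  have fmono : ∀ x y : Fin n → ℝ, (∀ i, 0 < x i) → (∀ i, x i ≤ y i) → f x ≤ f y := by
    intro x y hx hxy
    have hy : ∀ i, 0 < y i := fun i => lt_of_lt_of_le (hx i) (hxy i)
    have key : ∀ s : Finset (Fin n), f x ≤ f (s.piecewise y x) := by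
      intro s
      refine Finset.induction_on s (by simp) ?_
      intro a s ha ih
      have hsmem : s.piecewise y x ∈ Γ := by
        intro i; by_cases hi : i ∈ s
        · rw [Finset.piecewise_eq_of_mem _ _ _ hi]; exact hy i
        · rw [Finset.piecewise_eq_of_notMem _ _ _ hi]; exact hx i
      have h2 : s.piecewise y x = Function.update (s.piecewise y x) a (x a) := by
        funext i
        rcases eq_or_ne i a with rfl | hne
        · rw [Function.update_self, Finset.piecewise_eq_of_notMem _ _ _ ha]
        · rw [Function.update_of_ne hne]
      rcases eq_or_lt_of_le (hxy a) with he | hlt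
      · have hins : (insert a s).piecewise y x = s.piecewise y x := by
          rw [s.piecewise_insert, ← he, ← h2]
        rw [hins]; exact ih
      · refine ih.trans ?_
        rw [s.piecewise_insert]
        nth_rewrite 1 [h2]
        exact (hmono _ hsmem a (x a) (y a) (hx a) hlt).le
    have h := key Finset.univ
    rwa [Finset.piecewise_univ] at h
  -- nonnegativity of padded vectors
  have hpadnn : ∀ v : Fin k → ℝ, (∀ i, 0 ≤ v i) → ∀ i, 0 ≤ pad n k v i := by
    intro v hv i
    dsimp only [pad]
    split
    · exact hv _
    · exact le_rfl
  -- positivity of the approximation points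
  have hq : ∀ (v : Fin k → ℝ), (∀ i, 0 ≤ v i) → ∀ m : ℕ,
      (pad n k v + ((m : ℝ) + 1)⁻¹ • (1 : Fin n → ℝ)) ∈ Γ := by
    intro v hv m i
    have hε : (0 : ℝ) < ((m : ℝ) + 1)⁻¹ := by positivity
    simpa using add_pos_of_nonneg_of_pos (hpadnn v hv i) hε
  -- the value of g on a padded vector is the limit of values of f
  have gtend : ∀ v : Fin k → ℝ, (∀ i, 0 ≤ v i) →
      Tendsto (fun m : ℕ => f (pad n k v + ((m : ℝ) + 1)⁻¹ • (1 : Fin n → ℝ))) atTop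
        (𝓝 (g (pad n k v))) := by
    intro v hv
    have hcont := (hg _ (hcl _ (hpadnn v hv))).tendsto
    have hpath : Tendsto (fun m : ℕ => pad n k v + ((m : ℝ) + 1)⁻¹ • (1 : Fin n → ℝ)) atTop
        (𝓝[closure Γ] (pad n k v)) :=
      (tendsto_nhdsWithin_iff).2 ⟨happrox _, Eventually.of_forall fun m => subset_closure (hq v hv m)⟩
    exact (hcont.comp hpath).congr fun m => hgf _ (hq v hv m)
  -- positivity of g on the k-dimensional face
  obtain ⟨w, hw, hwne⟩ := hnz
  have hgw : 0 < g (pad n k w) := by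
    have ht := gtend w fun i => (hw i).le
    have hge : 0 ≤ g (pad n k w) :=
      ge_of_tendsto ht (Eventually.of_forall fun m => (hpos _ (hq w (fun i => (hw i).le) m)).le)
    exact lt_of_le_of_ne hge (Ne.symm hwne)
  have gpos : ∀ z : Fin k → ℝ, (∀ i, 0 < z i) → 0 < g (pad n k z) := by
    intro z hz
    haveI : Nonempty (Fin k) := ⟨⟨0, hk0⟩⟩
    set c : ℝ := min 1 (Finset.univ.inf' Finset.univ_nonempty fun i => z i / w i) with hc
    have hc1 : c ≤ 1 := min_le_left _ _
    have hcpos : 0 < c := by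
      refine lt_min one_pos ?_
      rw [Finset.lt_inf'_iff]
      exact fun i _ => div_pos (hz i) (hw i)
    have hcw : ∀ i, c * w i ≤ z i := by
      intro i
      have h1 : c ≤ z i / w i := (min_le_right _ _).trans (Finset.inf'_le _ (Finset.mem_univ i))
      calc c * w i ≤ (z i / w i) * w i := mul_le_mul_of_nonneg_right h1 (hw i).le
        _ = z i := div_mul_cancel₀ _ (hw i).ne'
    have hineq : ∀ m : ℕ, c * f (pad n k w + ((m : ℝ) + 1)⁻¹ • (1 : Fin n → ℝ))
        ≤ f (pad n k z + ((m : ℝ) + 1)⁻¹ • (1 : Fin n → ℝ)) := by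
      intro m
      have hε : (0 : ℝ) < ((m : ℝ) + 1)⁻¹ := by positivity
      have h1 : c * f (pad n k w + ((m : ℝ) + 1)⁻¹ • (1 : Fin n → ℝ))
          = f (c • (pad n k w + ((m : ℝ) + 1)⁻¹ • (1 : Fin n → ℝ))) :=
        (hhom _ (hq w (fun i => (hw i).le) m) c hcpos).symm
      rw [h1]
      refine fmono _ _ (fun i => ?_) fun i => ?_
      · have := hq w (fun i => (hw i).le) m i
        simp only [Pi.smul_apply, smul_eq_mul]
        exact mul_pos hcpos this
      · simp only [Pi.smul_apply, Pi.add_apply, Pi.one_apply, smul_eq_mul, mul_one]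
        dsimp only [pad]
        by_cases hik : (i : ℕ) < k
        · simp only [hik, dif_pos]
          nlinarith [hcw ⟨i, hik⟩, hε, hc1, hcpos]
        · simp only [hik, dif_neg, not_false_iff]
          nlinarith [hε, hc1, hcpos]
    have h1 := gtend w fun i => (hw i).le
    have h2 := gtend z fun i => (hz i).le
    have hle := le_of_tendsto_of_tendsto' (h1.const_mul c) h2 hineq
    exact lt_of_lt_of_le (mul_pos hcpos hgw) hle
  -- positivity of constant extensions
  have extpos : ∀ t : ℝ, 0 < t → ∀ v : Fin k → ℝ, (∀ i, 0 < v i) →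
      ∀ j : Fin (n - 1), 0 < extC k (n - 1) t v j := by
    intro t ht v hv j
    dsimp only [extC]
    split
    · exact hv _
    · exact ht
  -- the key limit
  have exttend : ∀ v : Fin k → ℝ, (∀ i, 0 < v i) →
      Tendsto (fun m : ℕ =>
          (g (pad n (n - 1) (fun j => (extC k (n - 1) ((m : ℝ) + 1) v j)⁻¹)))⁻¹) atTop
        (𝓝 ((g (pad n k fun i => (v i)⁻¹))⁻¹)) := by
    intro v hv
    have hvinv : ∀ i, 0 < (v i)⁻¹ := fun i => inv_pos.2 (hv i)
    have hin : Tendsto (fun m : ℕ =>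
        pad n (n - 1) (fun j => (extC k (n - 1) ((m : ℝ) + 1) v j)⁻¹)) atTop
        (𝓝 (pad n k fun i => (v i)⁻¹)) := by
      rw [tendsto_pi_nhds]
      intro i
      by_cases hin1 : (i : ℕ) < n - 1
      · by_cases hik : (i : ℕ) < k
        · have hval : ∀ m : ℕ,
              pad n (n - 1) (fun j => (extC k (n - 1) ((m : ℝ) + 1) v j)⁻¹) i = (v ⟨i, hik⟩)⁻¹ := by
            intro m; simp [pad, extC, hin1, hik]
          have htarget : pad n k (fun i => (v i)⁻¹) i = (v ⟨i, hik⟩)⁻¹ := by simp [pad, hik]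
          rw [htarget]
          exact tendsto_const_nhds.congr fun m => (hval m).symm
        · have hval : ∀ m : ℕ,
              pad n (n - 1) (fun j => (extC k (n - 1) ((m : ℝ) + 1) v j)⁻¹) i = ((m : ℝ) + 1)⁻¹ := by
            intro m; simp [pad, extC, hin1, hik]
          have htarget : pad n k (fun i => (v i)⁻¹) i = 0 := by simp [pad, hik]
          rw [htarget]
          have h0 : Tendsto (fun m : ℕ => ((m : ℝ) + 1)⁻¹) atTop (𝓝 0) := by
            simpa [one_div] using tendsto_one_div_add_atTop_nhds_zero_nat (𝕜 := ℝ)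
          exact h0.congr fun m => (hval m).symm
      · have hik : ¬ (i : ℕ) < k := fun h => hin1 (h.trans hkn)
        have hval : ∀ m : ℕ,
            pad n (n - 1) (fun j => (extC k (n - 1) ((m : ℝ) + 1) v j)⁻¹) i = 0 := by
          intro m; simp [pad, hin1]
        have htarget : pad n k (fun i => (v i)⁻¹) i = 0 := by simp [pad, hik]
        rw [htarget]
        exact tendsto_const_nhds.congr fun m => (hval m).symm
    have hpathmem : ∀ m : ℕ,
        pad n (n - 1) (fun j => (extC k (n - 1) ((m : ℝ) + 1) v j)⁻¹) ∈ closure Γ := by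
      intro m
      refine hcl _ fun i => ?_
      dsimp only [pad]
      split
      · have hm : (0 : ℝ) < (m : ℝ) + 1 := by positivity
        exact (inv_pos.2 (extpos _ hm v hv _)).le
      · exact le_rfl
    have htargetmem : pad n k (fun i => (v i)⁻¹) ∈ closure Γ :=
      hcl _ (hpadnn _ fun i => (hvinv i).le)
    have hgt : Tendsto (fun m : ℕ =>
        g (pad n (n - 1) (fun j => (extC k (n - 1) ((m : ℝ) + 1) v j)⁻¹))) atTop
        (𝓝 (g (pad n k fun i => (v i)⁻¹))) :=
      (hg _ htargetmem).tendsto.comp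
        ((tendsto_nhdsWithin_iff).2 ⟨hin, Eventually.of_forall hpathmem⟩)
    exact hgt.inv₀ (ne_of_gt (gpos _ hvinv))
  constructor
  · intro x hx y hy a b ha hb hab i
    simp only [Pi.add_apply, Pi.smul_apply, smul_eq_mul]
    exact comb_pos ha hb hab (hx i) (hy i)
  · intro x hx y hy a b ha hb hab
    have hX : ∀ i, 0 < (a • x + b • y) i := fun i => by
      simp only [Pi.add_apply, Pi.smul_apply, smul_eq_mul]
      exact comb_pos ha hb hab (hx i) (hy i)
    have hineq : ∀ m : ℕ,
        a * (g (pad n (n - 1) (fun j => (extC k (n - 1) ((m : ℝ) + 1) x j)⁻¹)))⁻¹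
          + b * (g (pad n (n - 1) (fun j => (extC k (n - 1) ((m : ℝ) + 1) y j)⁻¹)))⁻¹
        ≤ (g (pad n (n - 1) (fun j => (extC k (n - 1) ((m : ℝ) + 1) (a • x + b • y) j)⁻¹)))⁻¹ := by
      intro m
      have ht : (0 : ℝ) < (m : ℝ) + 1 := by positivity
      have hmx : extC k (n - 1) ((m : ℝ) + 1) x ∈ {x : Fin (n - 1) → ℝ | ∀ i, 0 < x i} :=
        extpos _ ht x hx
      have hmy : extC k (n - 1) ((m : ℝ) + 1) y ∈ {x : Fin (n - 1) → ℝ | ∀ i, 0 < x i} :=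
        extpos _ ht y hy
      have hcomb : a • extC k (n - 1) ((m : ℝ) + 1) x + b • extC k (n - 1) ((m : ℝ) + 1) y
          = extC k (n - 1) ((m : ℝ) + 1) (a • x + b • y) := by
        funext j
        simp only [Pi.add_apply, Pi.smul_apply, smul_eq_mul, extC]
        by_cases hj : (j : ℕ) < k
        · simp [hj]
        · simp only [hj, dif_neg, not_false_iff]
          linear_combination ((m : ℝ) + 1) * hab
      have h := hfaceIC.2 hmx hmy ha hb hab
      rw [hcomb] at h
      simpa [smul_eq_mul] using h
    have h1 := exttend x hx
    have h2 := exttend y hy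
    have h3 := exttend _ hX
    have h := le_of_tendsto_of_tendsto' ((h1.const_mul a).add (h2.const_mul b)) h3 hineq
    simpa [smul_eq_mul] using h
end

section
/- Let U and V be compact convex subsets of ℝ^{n+1}. Then the Hausdorff distance between the boundaries satisfies d_H(∂U, ∂V) ≤ d_H(U, V); in particular d̂_H(U,V) := max{d_H(U,V), d_H(∂U,∂V)} = d_H(U,V). -/
/-!
Let `r = d_H(U, V)` and `x ∈ ∂U`; we find a point of `∂V` within `r` of `x`. If `x ∉ V`, the
segment from `x` to a nearest point of `V` has length at most `r` and crosses `∂V`. If `x ∈ V`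
and `∂V` kept distance `ρ > r` from `x`, the ball `B(x, ρ)` would lie in `V`, hence within `r`
of `U`. Convexity of `U` then forces `B(x, ρ - r) ⊆ U`: a point `z` of this ball outside `U` is
separated from `U` by a hyperplane with unit normal `a`, and `x + t a` with `‖z - x‖ + r < t < ρ`
is a point of the ball at distance more than `r` from `U`. So `x ∈ interior U`, a contradiction.
-/

open Set Metric
open scoped RealInnerProductSpace

theorem IsPreconnected.inter_frontier_nonempty {X : Type*} [TopologicalSpace X] {s t : Set X}
    (hs : IsPreconnected s) (hst : (s ∩ t).Nonempty) (hsn : (s \ t).Nonempty) :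
    (s ∩ frontier t).Nonempty := by
  by_contra! h
  have hsplit : ∀ p ∈ s, p ∈ closure t → p ∈ interior t := fun p hp hpt ↦ by
    by_contra hpi
    exact h.subset ⟨hp, hpt, hpi⟩
  obtain ⟨p, hps, hpt⟩ := hst
  obtain ⟨q, hqs, hqt⟩ := hsn
  obtain ⟨_, -, hint, hext⟩ := hs (interior t) (closure t)ᶜ isOpen_interior
    isClosed_closure.isOpen_compl (fun p hp ↦ (em (p ∈ closure t)).imp (hsplit p hp) id)
    ⟨p, hps, hsplit p hps (subset_closure hpt)⟩
    ⟨q, hqs, fun hq ↦ hqt (interior_subset (hsplit q hqs hq))⟩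
  exact hext (interior_subset_closure hint)

section Frontier

variable {E : Type*} [NormedAddCommGroup E] [NormedSpace ℝ E] {s : Set E} {x y : E}

theorem infDist_frontier_le_dist (hx : x ∈ s) (hy : y ∉ s) :
    infDist x (frontier s) ≤ dist x y := by
  obtain ⟨z, hz, hzs⟩ := (convex_segment x y).isPreconnected.inter_frontier_nonempty
    ⟨x, left_mem_segment ℝ x y, hx⟩ ⟨y, right_mem_segment ℝ x y, hy⟩
  calc infDist x (frontier s) ≤ dist x z := infDist_le_dist_of_mem hzs
    _ ≤ dist x y := by linarith [dist_add_dist_of_mem_segment hz, dist_nonneg (x := z) (y := y)]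

theorem infDist_frontier_le_infDist_compl (hx : x ∈ s) :
    infDist x (frontier s) ≤ infDist x sᶜ := by
  rcases sᶜ.eq_empty_or_nonempty with hs | hs
  · simp [compl_empty_iff.mp hs]
  · exact (le_infDist hs).mpr fun y hy ↦ infDist_frontier_le_dist hx hy

theorem infDist_frontier_le_infDist (hx : x ∉ s) :
    infDist x (frontier s) ≤ infDist x s := by
  simpa only [frontier_compl, compl_compl] using infDist_frontier_le_infDist_compl (s := sᶜ) hx

end Frontier

section Convex

variable {E : Type*} [NormedAddCommGroup E] [InnerProductSpace ℝ E] {U : Set E}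

theorem exists_norm_eq_one_forall_inner_le_of_notMem (hUne : U.Nonempty) (hU : IsComplete U)
    (hUc : Convex ℝ U) {z : E} (hz : z ∉ U) :
    ∃ a : E, ‖a‖ = 1 ∧ ∀ u ∈ U, ⟪a, u⟫ ≤ ⟪a, z⟫ := by
  obtain ⟨p, hpU, hp⟩ := exists_norm_eq_iInf_of_complete_convex hUne hU hUc z
  have hproj := (norm_eq_iInf_iff_real_inner_le_zero hUc hpU).mp hp
  have hzp : 0 < ‖z - p‖ := norm_pos_iff.mpr (sub_ne_zero.mpr fun h ↦ hz (h ▸ hpU))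
  refine ⟨‖z - p‖⁻¹ • (z - p), by simp [norm_smul, hzp.ne'], fun u hu ↦ ?_⟩
  have hu' : ⟪z - p, u⟫ ≤ ⟪z - p, z⟫ := by
    have h₁ := hproj u hu
    have h₂ := real_inner_self_nonneg (x := z - p)
    rw [inner_sub_right] at h₁ h₂
    linarith
  simp only [real_inner_smul_left]
  exact mul_le_mul_of_nonneg_left hu' (inv_nonneg.mpr hzp.le)

theorem ball_sub_subset_of_forall_infDist_le (hUne : U.Nonempty) (hU : IsComplete U)
    (hUc : Convex ℝ U) {x : E} {ρ r : ℝ} (hr : 0 ≤ r)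
    (hball : ∀ w ∈ ball x ρ, infDist w U ≤ r) : ball x (ρ - r) ⊆ U := by
  intro z hz
  by_contra hzU
  obtain ⟨a, ha, hsep⟩ := exists_norm_eq_one_forall_inner_le_of_notMem hUne hU hUc hzU
  rw [mem_ball, dist_eq_norm] at hz
  obtain ⟨t, hzt, htρ⟩ := exists_between (lt_sub_iff_add_lt.mp hz)
  have ht : 0 ≤ t := by linarith [norm_nonneg (z - x)]
  have hw : x + t • a ∈ ball x ρ := by
    simpa [norm_smul, ha, abs_of_nonneg ht] using htρ
  have hfar : t - ‖z - x‖ ≤ infDist (x + t • a) U := by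
    refine (le_infDist hUne).mpr fun u hu ↦ ?_
    have hxz : ⟪a, z - x⟫ ≤ ‖z - x‖ := by simpa [ha] using real_inner_le_norm a (z - x)
    calc t - ‖z - x‖ ≤ t - ⟪a, z - x⟫ + (⟪a, z⟫ - ⟪a, u⟫) := by linarith [hsep u hu]
      _ = ⟪a, x + t • a - u⟫ := by
          simp only [inner_sub_right, inner_add_right, real_inner_smul_right,
            real_inner_self_eq_norm_sq, ha]
          ring
      _ ≤ dist (x + t • a) u := by
          simpa [ha, dist_eq_norm] using real_inner_le_norm a (x + t • a - u)
  linarith [hball _ hw]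

end Convex

theorem infDist_frontier_le_hausdorffDist {E : Type*} [NormedAddCommGroup E]
    [InnerProductSpace ℝ E] {U V : Set E} (hU : IsCompact U) (hUc : Convex ℝ U)
    (hV : IsCompact V) {x : E} (hx : x ∈ frontier U) :
    infDist x (frontier V) ≤ hausdorffDist U V := by
  rcases V.eq_empty_or_nonempty with rfl | hVne
  · simp
  have hxU : x ∈ U := hU.isClosed.frontier_subset hx
  have hfin : hausdorffEDist U V ≠ ⊤ :=
    hausdorffEDist_ne_top_of_nonempty_of_bounded ⟨x, hxU⟩ hVne hU.isBounded hV.isBounded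
  by_cases hxV : x ∈ V
  · by_contra! hlt
    have hnear : ∀ w ∈ ball x (infDist x Vᶜ), infDist w U ≤ hausdorffDist U V := fun w hw ↦ by
      rw [hausdorffDist_comm]
      exact infDist_le_hausdorffDist_of_mem (ball_infDist_compl_subset hw)
        (by rwa [hausdorffEDist_comm])
    have hsub := ball_sub_subset_of_forall_infDist_le ⟨x, hxU⟩ hU.isComplete hUc
      hausdorffDist_nonneg hnear
    have hpos : 0 < infDist x Vᶜ - hausdorffDist U V := by
      linarith [infDist_frontier_le_infDist_compl (s := V) hxV]
    exact hx.2 (mem_interior.mpr ⟨_, hsub, isOpen_ball, mem_ball_self hpos⟩)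
  · calc infDist x (frontier V) ≤ infDist x V := infDist_frontier_le_infDist hxV
      _ ≤ hausdorffDist U V := infDist_le_hausdorffDist_of_mem hxU hfin

theorem hausdorff_dist_boundaries_le_general (n : ℕ)
    (U V : Set (EuclideanSpace ℝ (Fin (n + 1))))
    (hUcpt : IsCompact U) (hVcpt : IsCompact V)
    (hUconv : Convex ℝ U) (hVconv : Convex ℝ V) :
    hausdorffDist (frontier U) (frontier V) ≤ hausdorffDist U V ∧
    max (hausdorffDist U V) (hausdorffDist (frontier U) (frontier V)) = hausdorffDist U V := by
  have h : hausdorffDist (frontier U) (frontier V) ≤ hausdorffDist U V := by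
    refine hausdorffDist_le_of_infDist hausdorffDist_nonneg
      (fun x hx ↦ infDist_frontier_le_hausdorffDist hUcpt hUconv hVcpt hx) fun x hx ↦ ?_
    rw [hausdorffDist_comm]
    exact infDist_frontier_le_hausdorffDist hVcpt hVconv hUcpt hx
  exact ⟨h, max_eq_left h⟩

/-- For compact convex sets `U`, `V`, the Hausdorff distance between the boundaries is
bounded by the Hausdorff distance between the sets; in particular
`max (d_H(U,V)) (d_H(∂U,∂V)) = d_H(U,V)`. -/
theorem hausdorff_dist_boundaries_le (n : ℕ)
    (U V : Set (EuclideanSpace ℝ (Fin (n + 1))))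
    (hUcpt : IsCompact U) (hVcpt : IsCompact V)
    (hUconv : Convex ℝ U) (hVconv : Convex ℝ V)
    (hUint : (interior U).Nonempty) (hVint : (interior V).Nonempty) :
    hausdorffDist (frontier U) (frontier V) ≤ hausdorffDist U V ∧
    max (hausdorffDist U V) (hausdorffDist (frontier U) (frontier V)) = hausdorffDist U V :=
  hausdorff_dist_boundaries_le_general n U V hUcpt hVcpt hUconv hVconv
end

section
/- Let U ⊆ V be compact convex subsets of ℝ^{n+1} and let Ω₁, Ω₂ be closed sets with U ⊆ Ωᵢ ⊆ V for i = 1,2. Then d_H(Ω₁, Ω₂) ≤ d_H(U, V) and d_H(∂Ω₁, ∂Ω₂) ≤ d_H(U, V). -/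
/-!
Every point of `V` lies within `d_H(U, V)` of `U`, and `U` lies inside both sets, which gives the
first bound. For the boundaries, take `x ∈ ∂Ω₁`; then `x ∈ V` and `x ∉ int U`. If `x ∉ Ω₂`, the
segment from `x` to a point of `U ⊆ Ω₂` at distance about `d_H(U, V)` crosses `∂Ω₂`. If `x ∈ Ω₂`,
a hyperplane through `x` that supports `U` (Hahn–Banach) gives a unit outer normal `e`; the point
`x + r • e` is at distance at least `r` from `U`, hence outside `V ⊇ Ω₂` as soon as
`r > d_H(U, V)`, and the segment from `x` to it crosses `∂Ω₂`.
-/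

open Set Metric RealInnerProductSpace

namespace Metric

variable {α : Type*} [PseudoMetricSpace α]

theorem infDist_le_hausdorffDist_of_mem_of_subset {U V Ω : Set α} {x : α} (hxV : x ∈ V)
    (hUΩ : U ⊆ Ω) (hfin : hausdorffEDist U V ≠ ⊤) : infDist x Ω ≤ hausdorffDist U V := by
  refine le_of_forall_gt_imp_ge_of_dense fun r hr => ?_
  obtain ⟨u, hu, hux⟩ := exists_dist_lt_of_hausdorffDist_lt' hxV hr hfin
  calc infDist x Ω ≤ dist x u := infDist_le_dist_of_mem (hUΩ hu)
    _ ≤ r := (dist_comm x u).trans_le hux.le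

theorem hausdorffDist_le_hausdorffDist_of_squeezed {U V Ω₁ Ω₂ : Set α}
    (hfin : hausdorffEDist U V ≠ ⊤) (hU₁ : U ⊆ Ω₁) (h₁V : Ω₁ ⊆ V) (hU₂ : U ⊆ Ω₂)
    (h₂V : Ω₂ ⊆ V) : hausdorffDist Ω₁ Ω₂ ≤ hausdorffDist U V :=
  hausdorffDist_le_of_infDist hausdorffDist_nonneg
    (fun _ hx => infDist_le_hausdorffDist_of_mem_of_subset (h₁V hx) hU₂ hfin)
    (fun _ hx => infDist_le_hausdorffDist_of_mem_of_subset (h₂V hx) hU₁ hfin)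

end Metric

section InnerProductSpace

variable {E : Type*} [NormedAddCommGroup E] [InnerProductSpace ℝ E]

theorem Metric.infDist_frontier_le_dist_of_mem_of_notMem [FiniteDimensional ℝ E] {s : Set E}
    {x y : E} (hx : x ∈ s) (hy : y ∉ s) : infDist x (frontier s) ≤ dist x y := by
  obtain ⟨z, hz, hxz⟩ :=
    exists_mem_frontier_infDist_compl_eq_dist hx ((ne_univ_iff_exists_notMem s).2 ⟨y, hy⟩)
  calc infDist x (frontier s) ≤ dist x z := infDist_le_dist_of_mem hz
    _ = infDist x sᶜ := hxz.symm
    _ ≤ dist x y := infDist_le_dist_of_mem hy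

theorem Convex.exists_norm_eq_one_inner_sub_nonpos [CompleteSpace E] {s : Set E} {x : E}
    (hs : Convex ℝ s) (hint : (interior s).Nonempty) (hx : x ∉ interior s) :
    ∃ e : E, ‖e‖ = 1 ∧ ∀ u ∈ s, ⟪e, u - x⟫ ≤ 0 := by
  obtain ⟨f, hf⟩ := geometric_hahn_banach_open_point hs.interior isOpen_interior hx
  have hfs : ∀ u ∈ s, f u ≤ f x := by
    have hcl : closure (interior s) ⊆ {y | f y ≤ f x} :=
      closure_minimal (fun y hy => (hf y hy).le) (isClosed_le f.continuous continuous_const)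
    rw [hs.closure_interior_eq_closure_of_nonempty_interior hint] at hcl
    exact fun u hu => hcl (subset_closure hu)
  set v := (InnerProductSpace.toDual ℝ E).symm f
  have hv : v ≠ 0 := by
    obtain ⟨a, ha⟩ := hint
    rintro hv0
    have hf0 : f = 0 := by simpa [v] using hv0
    simpa [hf0] using hf a ha
  refine ⟨‖v‖⁻¹ • v, norm_smul_inv_norm hv, fun u hu => ?_⟩
  rw [real_inner_smul_left, InnerProductSpace.toDual_symm_apply, map_sub]
  exact mul_nonpos_of_nonneg_of_nonpos (by positivity) (sub_nonpos.2 (hfs u hu))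

theorem le_dist_add_smul_of_inner_sub_nonpos {e x u : E} (he : ‖e‖ = 1) (hu : ⟪e, u - x⟫ ≤ 0)
    (t : ℝ) : t ≤ dist (x + t • e) u := by
  have hinner : ⟪e, x + t • e - u⟫ = t - ⟪e, u - x⟫ := by
    rw [show x + t • e - u = t • e - (u - x) by abel, inner_sub_right, real_inner_smul_right,
      real_inner_self_eq_norm_sq, he, one_pow, mul_one]
  calc t ≤ ⟪e, x + t • e - u⟫ := by linarith
    _ ≤ ‖e‖ * ‖x + t • e - u‖ := real_inner_le_norm _ _
    _ = dist (x + t • e) u := by rw [he, one_mul, dist_eq_norm]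

variable [FiniteDimensional ℝ E]

theorem Metric.infDist_frontier_le_hausdorffDist_of_notMem_interior {U V Ω : Set E} {x : E}
    (hU : Convex ℝ U) (hUint : (interior U).Nonempty) (hfin : hausdorffEDist U V ≠ ⊤)
    (hUΩ : U ⊆ Ω) (hΩV : Ω ⊆ V) (hxV : x ∈ V) (hxU : x ∉ interior U) :
    infDist x (frontier Ω) ≤ hausdorffDist U V := by
  obtain ⟨e, he, hnormal⟩ := hU.exists_norm_eq_one_inner_sub_nonpos hUint hxU
  refine le_of_forall_gt_imp_ge_of_dense fun r hr => ?_
  by_cases hxΩ : x ∈ Ω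
  · have hfar : x + r • e ∉ Ω := fun hΩ => by
      obtain ⟨u, hu, hur⟩ := exists_dist_lt_of_hausdorffDist_lt' (hΩV hΩ) hr hfin
      rw [dist_comm] at hur
      exact (le_dist_add_smul_of_inner_sub_nonpos he (hnormal u hu) r).not_gt hur
    have hr0 : 0 ≤ r := hausdorffDist_nonneg.trans hr.le
    calc infDist x (frontier Ω) ≤ dist x (x + r • e) :=
          infDist_frontier_le_dist_of_mem_of_notMem hxΩ hfar
      _ = r := by rw [dist_self_add_right, norm_smul, he, mul_one, Real.norm_of_nonneg hr0]
  · obtain ⟨u, hu, hux⟩ := exists_dist_lt_of_hausdorffDist_lt' hxV hr hfin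
    have hcross := infDist_frontier_le_dist_of_mem_of_notMem (s := Ωᶜ) hxΩ (not_not.2 (hUΩ hu))
    rw [frontier_compl, dist_comm] at hcross
    exact hcross.trans hux.le

theorem Metric.hausdorffDist_frontier_le_hausdorffDist_of_squeezed {U V Ω₁ Ω₂ : Set E}
    (hU : Convex ℝ U) (hUint : (interior U).Nonempty) (hfin : hausdorffEDist U V ≠ ⊤)
    (h₁ : IsClosed Ω₁) (h₂ : IsClosed Ω₂) (hU₁ : U ⊆ Ω₁) (h₁V : Ω₁ ⊆ V) (hU₂ : U ⊆ Ω₂)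
    (h₂V : Ω₂ ⊆ V) : hausdorffDist (frontier Ω₁) (frontier Ω₂) ≤ hausdorffDist U V := by
  have hside : ∀ {Ω Ω' : Set E}, IsClosed Ω → U ⊆ Ω → Ω ⊆ V → U ⊆ Ω' → Ω' ⊆ V →
      ∀ x ∈ frontier Ω, infDist x (frontier Ω') ≤ hausdorffDist U V :=
    fun hΩ hUΩ hΩV hUΩ' hΩ'V x hx =>
      infDist_frontier_le_hausdorffDist_of_notMem_interior hU hUint hfin hUΩ' hΩ'V
        (hΩV (hΩ.frontier_subset hx)) fun hxU => hx.2 (interior_mono hUΩ hxU)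
  exact hausdorffDist_le_of_infDist hausdorffDist_nonneg (hside h₁ hU₁ h₁V hU₂ h₂V)
    (hside h₂ hU₂ h₂V hU₁ h₁V)

end InnerProductSpace

theorem hausdorff_dist_squeezed_sets_general (n : ℕ)
    (U V Ω₁ Ω₂ : Set (EuclideanSpace ℝ (Fin (n + 1))))
    (hUcpt : IsCompact U) (hVcpt : IsCompact V)
    (hUconv : Convex ℝ U)
    (hUint : (interior U).Nonempty)
    (h₁ : IsClosed Ω₁) (h₂ : IsClosed Ω₂)
    (hU₁ : U ⊆ Ω₁) (h₁V : Ω₁ ⊆ V) (hU₂ : U ⊆ Ω₂) (h₂V : Ω₂ ⊆ V) :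
    hausdorffDist Ω₁ Ω₂ ≤ hausdorffDist U V ∧
    hausdorffDist (frontier Ω₁) (frontier Ω₂) ≤ hausdorffDist U V := by
  have hU : U.Nonempty := hUint.mono interior_subset
  have hfin : hausdorffEDist U V ≠ ⊤ := hausdorffEDist_ne_top_of_nonempty_of_bounded hU
    (hU.mono (hU₁.trans h₁V)) hUcpt.isBounded hVcpt.isBounded
  exact ⟨hausdorffDist_le_hausdorffDist_of_squeezed hfin hU₁ h₁V hU₂ h₂V,
    hausdorffDist_frontier_le_hausdorffDist_of_squeezed hUconv hUint hfin h₁ h₂ hU₁ h₁V hU₂ h₂V⟩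

/-- If `U ⊆ Ωᵢ ⊆ V` with `U`, `V` compact convex, then the Hausdorff distances of the
sets `Ω₁, Ω₂` and of their boundaries are bounded by `d_H(U,V)`. -/
theorem hausdorff_dist_squeezed_sets (n : ℕ)
    (U V Ω₁ Ω₂ : Set (EuclideanSpace ℝ (Fin (n + 1))))
    (hUcpt : IsCompact U) (hVcpt : IsCompact V)
    (hUconv : Convex ℝ U) (hVconv : Convex ℝ V)
    (hUint : (interior U).Nonempty) (hVint : (interior V).Nonempty)
    (hUV : U ⊆ V)
    (h₁ : IsClosed Ω₁) (h₂ : IsClosed Ω₂)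
    (hU₁ : U ⊆ Ω₁) (h₁V : Ω₁ ⊆ V) (hU₂ : U ⊆ Ω₂) (h₂V : Ω₂ ⊆ V) :
    hausdorffDist Ω₁ Ω₂ ≤ hausdorffDist U V ∧
    hausdorffDist (frontier Ω₁) (frontier Ω₂) ≤ hausdorffDist U V :=
  hausdorff_dist_squeezed_sets_general n U V Ω₁ Ω₂ hUcpt hVcpt hUconv hUint h₁ h₂ hU₁ h₁V hU₂ h₂V
end

section
/- Let Ω be a compact convex set in ℝ^{n+1} with 0 in its interior and Ω ⊆ r₊B. If Ω' is a closed set with (1-a)Ω ⊆ Ω' ⊆ (1+a)Ω for some 0 ≤ a < 1, then d_H(Ω',Ω) ≤ a·r₊ and d_H(∂Ω',∂Ω) ≤ a·r₊. -/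
open Set Metric Pointwise

/-- If `(1-a)Ω ⊆ Ω' ⊆ (1+a)Ω` for a compact convex body `Ω ⊆ rhiB` with `0` in its
interior, then `Ω'` and its boundary are within Hausdorff distance `a·rhi` of `Ω` and its
boundary. -/
theorem sandwich_implies_hausdorff_close (n : ℕ) (rhi a : ℝ)
    (ha0 : 0 ≤ a) (ha1 : a < 1)
    (Ω Ω' : Set (EuclideanSpace ℝ (Fin (n + 1))))
    (hΩcpt : IsCompact Ω) (hΩconv : Convex ℝ Ω)
    (h0 : (0 : EuclideanSpace ℝ (Fin (n + 1))) ∈ interior Ω)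
    (hout : Ω ⊆ closedBall (0 : EuclideanSpace ℝ (Fin (n + 1))) rhi)
    (hΩ'cl : IsClosed Ω')
    (hsub : (1 - a) • Ω ⊆ Ω') (hsup : Ω' ⊆ (1 + a) • Ω) :
    hausdorffDist Ω' Ω ≤ a * rhi ∧
    hausdorffDist (frontier Ω') (frontier Ω) ≤ a * rhi := by
  have h0Ω : (0 : EuclideanSpace ℝ (Fin (n + 1))) ∈ Ω := interior_subset h0
  have hrhi : 0 ≤ rhi := by simpa using hout h0Ω
  have har : 0 ≤ a * rhi := mul_nonneg ha0 hrhi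
  have hnorm : ∀ y ∈ Ω, ‖y‖ ≤ rhi := fun y hy => by
    simpa [mem_closedBall, dist_eq_norm] using hout hy
  have hnhds : Ω ∈ nhds (0 : EuclideanSpace ℝ (Fin (n + 1))) := mem_interior_iff_mem_nhds.mp h0
  have h1a : (0:ℝ) < 1 - a := by linarith
  have h1a' : (0:ℝ) < 1 + a := by linarith
  -- no point of Ω lies strictly beyond a frontier point on its ray
  have hray : ∀ x ∈ frontier Ω, ∀ c : ℝ, 1 < c → c • x ∉ Ω := by
    intro x hx c hc hcx
    have hcc : (0:ℝ) < c := lt_trans one_pos hc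
    have h1 : (0:ℝ) < 1 - c⁻¹ := by
      have : c⁻¹ < 1 := inv_lt_one_of_one_lt₀ hc
      linarith
    have hxint := hΩconv.combo_interior_self_mem_interior h0 hcx h1 (inv_nonneg.mpr hcc.le) (by ring)
    rw [smul_zero, zero_add, smul_smul, inv_mul_cancel₀ hcc.ne', one_smul] at hxint
    exact hx.2 hxint
  constructor
  · -- main Hausdorff bound
    apply hausdorffDist_le_of_mem_dist har
    · intro x' hx'
      obtain ⟨y, hy, rfl⟩ := hsup hx'
      refine ⟨y, hy, ?_⟩
      have hxy : (1 + a) • y - y = a • y := by module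
      rw [dist_eq_norm, hxy, norm_smul, Real.norm_eq_abs, abs_of_nonneg ha0]
      exact mul_le_mul_of_nonneg_left (hnorm y hy) ha0
    · intro y hy
      refine ⟨(1 - a) • y, hsub (smul_mem_smul_set hy), ?_⟩
      have hxy : y - (1 - a) • y = a • y := by module
      rw [dist_eq_norm, hxy, norm_smul, Real.norm_eq_abs, abs_of_nonneg ha0]
      exact mul_le_mul_of_nonneg_left (hnorm y hy) ha0
  · -- frontier Hausdorff bound
    apply hausdorffDist_le_of_mem_dist har
    · -- frontier Ω' → frontier Ω via the gauge
      intro x' hx'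
      have hx'Ω' : x' ∈ Ω' := hΩ'cl.frontier_subset hx'
      set g := gauge Ω x' with hg
      have hg_le : g ≤ 1 + a := by
        obtain ⟨y, hy, rfl⟩ := hsup hx'Ω'
        rw [hg, gauge_smul_of_nonneg h1a'.le, smul_eq_mul]
        calc (1 + a) * gauge Ω y ≤ (1 + a) * 1 :=
          mul_le_mul_of_nonneg_left (gauge_le_one_of_mem hy) h1a'.le
        _ = 1 + a := mul_one _
      have hg_ge : 1 - a ≤ g := by
        by_contra h
        push_neg at h
        have hlt : gauge Ω ((1 - a)⁻¹ • x') < 1 := by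
          rw [gauge_smul_of_nonneg (inv_nonneg.mpr h1a.le), smul_eq_mul]
          calc (1 - a)⁻¹ * g < (1 - a)⁻¹ * (1 - a) :=
            (mul_lt_mul_iff_right₀ (inv_pos.mpr h1a)).mpr h
          _ = 1 := inv_mul_cancel₀ h1a.ne'
        have hmem : (1 - a)⁻¹ • x' ∈ interior Ω :=
          (gauge_lt_one_iff_mem_interior hΩconv hnhds).mp hlt
        have : x' ∈ interior ((1 - a) • Ω) := by
          rw [interior_smul₀ h1a.ne' Ω]
          refine ⟨(1 - a)⁻¹ • x', hmem, ?_⟩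
          show (1 - a) • ((1 - a)⁻¹ • x') = x'
          rw [smul_smul, mul_inv_cancel₀ h1a.ne', one_smul]
        exact hx'.2 (interior_mono hsub this)
      have hg_pos : 0 < g := lt_of_lt_of_le h1a hg_ge
      set p := g⁻¹ • x' with hp
      have hpg : gauge Ω p = 1 := by
        rw [hp, gauge_smul_of_nonneg (inv_nonneg.mpr hg_pos.le), smul_eq_mul, ← hg,
          inv_mul_cancel₀ hg_pos.ne']
      have hpfr : p ∈ frontier Ω := (gauge_eq_one_iff_mem_frontier hΩconv hnhds).mp hpg
      refine ⟨p, hpfr, ?_⟩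
      have hpΩ : p ∈ Ω := hΩcpt.isClosed.frontier_subset hpfr
      have hx'p : x' = g • p := by
        rw [hp, smul_smul, mul_inv_cancel₀ hg_pos.ne', one_smul]
      have hdiff : x' - p = (g - 1) • p := by rw [hx'p]; module
      rw [dist_eq_norm, hdiff, norm_smul, Real.norm_eq_abs]
      have habs : |g - 1| ≤ a := abs_le.mpr ⟨by linarith, by linarith⟩
      exact mul_le_mul habs (hnorm p hpΩ) (norm_nonneg p) ha0
    · -- frontier Ω → frontier Ω' via a ray-crossing argument
      intro x hx
      have hxΩ : x ∈ Ω := hΩcpt.isClosed.frontier_subset hx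
      set T := {t : ℝ | t ∈ Icc (1 - a) (1 + a) ∧ t • x ∈ Ω'} with hT
      have hTne : (1 - a) ∈ T :=
        ⟨⟨le_refl _, by linarith⟩, hsub (smul_mem_smul_set hxΩ)⟩
      have hTbdd : BddAbove T := ⟨1 + a, fun t ht => ht.1.2⟩
      have hTcl : IsClosed T := by
        have : T = Icc (1 - a) (1 + a) ∩ (fun t : ℝ => t • x) ⁻¹' Ω' := rfl
        rw [this]
        exact isClosed_Icc.inter (hΩ'cl.preimage (continuous_id.smul continuous_const))
      set t₀ := sSup T with ht₀
      have hTcpt : IsCompact T := isCompact_Icc.of_isClosed_subset hTcl fun t ht => ht.1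
      have ht₀T : t₀ ∈ T := hTcpt.sSup_mem ⟨_, hTne⟩
      have hnotmem : ∀ s : ℝ, t₀ < s → s • x ∉ Ω' := by
        intro s hs hmem
        rcases le_or_gt s (1 + a) with hle | hgt
        · have hsT : s ∈ T := ⟨⟨le_trans ht₀T.1.1 hs.le, hle⟩, hmem⟩
          exact absurd (le_csSup hTbdd hsT) (not_le.mpr hs)
        · obtain ⟨y, hy, hey⟩ := hsup hmem
          have hey' : (1 + a) • y = s • x := hey
          have hyx : y = ((1 + a)⁻¹ * s) • x := by
            have h2 : ((1 + a)⁻¹ : ℝ) • ((1 + a) • y) = (1 + a)⁻¹ • (s • x) := by rw [hey']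
            rwa [smul_smul, smul_smul, inv_mul_cancel₀ h1a'.ne', one_smul] at h2
          have hc1 : 1 < (1 + a)⁻¹ * s := by
            have h3 : (1 + a)⁻¹ * (1 + a) < (1 + a)⁻¹ * s :=
              (mul_lt_mul_iff_right₀ (inv_pos.mpr h1a')).mpr hgt
            rwa [inv_mul_cancel₀ h1a'.ne'] at h3
          exact hray x hx _ hc1 (hyx ▸ hy)
      have hfr : t₀ • x ∈ frontier Ω' := by
        rw [frontier_eq_closure_inter_closure]
        refine ⟨subset_closure ht₀T.2, ?_⟩
        have hseq : Filter.Tendsto (fun k : ℕ => (t₀ + 1 / (k + 1)) • x)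
            Filter.atTop (nhds (t₀ • x)) := by
          have h1 : Filter.Tendsto (fun k : ℕ => t₀ + 1 / (k + 1))
              Filter.atTop (nhds (t₀ + 0)) :=
            tendsto_const_nhds.add tendsto_one_div_add_atTop_nhds_zero_nat
          rw [add_zero] at h1
          exact h1.smul_const x
        refine mem_closure_of_tendsto hseq (Filter.Eventually.of_forall fun k => ?_)
        refine hnotmem _ ?_
        have hk : (0:ℝ) < 1 / (k + 1) := by positivity
        linarith
      refine ⟨t₀ • x, hfr, ?_⟩
      have hdiff : x - t₀ • x = (1 - t₀) • x := by module
      rw [dist_eq_norm, hdiff, norm_smul, Real.norm_eq_abs]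
      have habs : |1 - t₀| ≤ a := abs_le.mpr ⟨by linarith [ht₀T.1.2], by linarith [ht₀T.1.1]⟩
      exact mul_le_mul habs (hnorm x hxΩ) (norm_nonneg x) ha0
end

section
/- Let f satisfy Conditions 1 on Γ₊ and suppose f is concave on Γ₊ and the restriction of f to the boundary face {x₁ = 0} is inverse-concave and positive. Fix C > 0 and order r₁ ≥ ... ≥ rₙ ≥ 0. Then at any boundary point r of the closed positive cone with f_*(r) ≥ C·r₁ and f_*(r) > 0, all partial derivatives ∂f_*/∂rᵢ are strictly positive; more precisely ∂f_*/∂r₁ ≥ f_*(r)·rₖ/(k·r₁²) where k = max{i : rᵢ > 0}. -/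
open Set
open Filter Topology

lemma support1d_aux {E : Type*} [NormedAddCommGroup E] [NormedSpace ℝ E] {s : Set E}
    {φ : E → ℝ} (hc : ConcaveOn ℝ s φ) {x y : E} (hx : x ∈ s) (hy : y ∈ s)
    {D : ℝ} (hD : HasDerivAt (fun t : ℝ => φ (x + t • (y - x))) D 0) :
    φ y - φ x ≤ D := by
  set ψ : ℝ → ℝ := fun t => φ (x + t • (y - x)) with hψ
  have hψ0 : ψ 0 = φ x := by simp [hψ]
  have hslope : Tendsto (slope ψ 0) (𝓝[>] (0:ℝ)) (𝓝 D) :=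
    (hasDerivAt_iff_tendsto_slope.mp hD).mono_left
      (nhdsWithin_mono _ (fun t ht => ne_of_gt ht))
  refine ge_of_tendsto hslope ?_
  filter_upwards [Ioc_mem_nhdsGT one_pos,
    self_mem_nhdsWithin] with t ht ht0
  have ht0' : (0:ℝ) < t := ht0
  have hcomb : x + t • (y - x) = (1 - t) • x + t • y := by
    rw [smul_sub, sub_smul, one_smul]; abel
  have hcc := hc.2 hx hy (by linarith [ht.2] : (0:ℝ) ≤ 1 - t) (le_of_lt ht0') (by ring)
  have h1 : (1 - t) * φ x + t * φ y ≤ ψ t := by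
    simpa [hψ, hcomb, smul_eq_mul] using hcc
  have : φ y - φ x ≤ (ψ t - ψ 0) / t := by
    rw [hψ0, le_div_iff₀ ht0']; nlinarith
  simpa [slope_def_field, hψ0, div_eq_mul_inv] using this


set_option maxHeartbeats 1000000 in
/-- At an ordered boundary point `r` of the closed positive cone where the (extended)
function `f_*` satisfies `f_*(r) ≥ C r₁ > 0`, all partial derivatives of `f_*` are
strictly positive; more precisely `∂f_*/∂r₁ ≥ f_*(r) rₖ / (k r₁²)` where
`k = max {i : rᵢ > 0}`. -/
theorem boundary_derivative_positive (n : ℕ) (hn : 0 < n)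
    (f gstar : (Fin n → ℝ) → ℝ) (Γ : Set (Fin n → ℝ)) (hΓ : Γ = {x | ∀ i, 0 < x i})
    (hsmooth : ContDiffOn ℝ (⊤ : ℕ∞) f Γ)
    (hsym : ∀ σ : Equiv.Perm (Fin n), ∀ x ∈ Γ, f (x ∘ σ) = f x)
    (hmono : ∀ x ∈ Γ, ∀ (i : Fin n) (s t : ℝ), 0 < s → s < t →
      f (Function.update x i s) < f (Function.update x i t))
    (hhom : ∀ x ∈ Γ, ∀ lam : ℝ, 0 < lam → f (lam • x) = lam * f x)
    (hpos : ∀ x ∈ Γ, 0 < f x)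
    (hnorm : f 1 = 1)
    (hconc : ConcaveOn ℝ Γ f)
    -- `gstar` is the continuous extension of `f_*` to the closed cone:
    (hgstar : ∀ x ∈ Γ, gstar x = (f (fun i => (x i)⁻¹))⁻¹)
    (hgstarcont : ContinuousOn gstar (closure Γ))
    (hstarconc : ConcaveOn ℝ (closure Γ) gstar)
    -- the given ordered boundary point:
    (C : ℝ) (hC : 0 < C) (r : Fin n → ℝ)
    (hrcl : r ∈ closure Γ) (hrbd : r ∉ Γ)
    (hord : ∀ i j : Fin n, i ≤ j → r j ≤ r i)
    (k : Fin n) (hk : 0 < r k) (hkmax : ∀ i : Fin n, k < i → r i = 0)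
    (hfs : C * r ⟨0, hn⟩ ≤ gstar r) (hfspos : 0 < gstar r)
    -- `f_*` extends `C¹` to boundary points where it is positive:
    (hdiff : DifferentiableAt ℝ gstar r)
    -- the restriction of `f_*` to the face of the first `k` coordinates is
    -- inverse-concave (condition (ix)):
    (hfaceIC : ConcaveOn ℝ {x : Fin n → ℝ | ∀ i, 0 < x i}
      (fun x => (gstar (fun i => if i ≤ k then (x i)⁻¹ else 0))⁻¹)) :
    (∀ i : Fin n, 0 < fderiv ℝ gstar r (Pi.single i 1)) ∧
    gstar r * r k / (((k : ℕ) + 1) * (r ⟨0, hn⟩) ^ 2) ≤ fderiv ℝ gstar r (Pi.single (⟨0, hn⟩ : Fin n) 1) := by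
  set z0 : Fin n := ⟨0, hn⟩ with hz0
  set D : Fin n → ℝ := fun i => fderiv ℝ gstar r (Pi.single i 1) with hD
  -- membership in Γ and closure
  have hmemΓ : ∀ x : Fin n → ℝ, (∀ i, 0 < x i) → x ∈ Γ := by
    intro x hx; rw [hΓ]; exact hx
  have memclos : ∀ x : Fin n → ℝ, (∀ i, 0 ≤ x i) → x ∈ closure Γ := by
    intro x hx
    have htd : Tendsto (fun ε : ℝ => x + ε • (1 : Fin n → ℝ)) (𝓝[>] 0) (𝓝 x) := by
      have : Tendsto (fun ε : ℝ => x + ε • (1 : Fin n → ℝ)) (𝓝 0) (𝓝 (x + (0:ℝ) • 1)) :=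
        (continuous_const.add (continuous_id.smul continuous_const)).tendsto 0
      simpa using this.mono_left nhdsWithin_le_nhds
    refine mem_closure_of_tendsto htd ?_
    filter_upwards [self_mem_nhdsWithin] with ε hε
    exact hmemΓ _ (fun i => by have : (0:ℝ) < ε := hε; simp; linarith [hx i])
  have hr0 : ∀ i, 0 ≤ r i := by
    intro i
    have hcl : closure Γ ⊆ {x : Fin n → ℝ | 0 ≤ x i} := by
      apply closure_minimal
      · intro x hx; rw [hΓ] at hx; exact le_of_lt (hx i)
      · exact isClosed_le continuous_const (continuous_apply i)
    exact hcl hrcl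
  -- generic tendsto into gstar along interior approach
  have tendsto_g : ∀ x : Fin n → ℝ, (∀ i, 0 ≤ x i) →
      Tendsto (fun ε : ℝ => gstar (x + ε • (1 : Fin n → ℝ))) (𝓝[>] 0) (𝓝 (gstar x)) := by
    intro x hx
    have hcw : Tendsto gstar (𝓝[closure Γ] x) (𝓝 (gstar x)) :=
      hgstarcont.continuousWithinAt (memclos x hx)
    apply hcw.comp
    rw [tendsto_nhdsWithin_iff]
    constructor
    · have : Tendsto (fun ε : ℝ => x + ε • (1 : Fin n → ℝ)) (𝓝 0) (𝓝 (x + (0:ℝ) • 1)) :=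
        (continuous_const.add (continuous_id.smul continuous_const)).tendsto 0
      simpa using this.mono_left nhdsWithin_le_nhds
    · filter_upwards [self_mem_nhdsWithin] with ε hε
      exact subset_closure (hmemΓ _ (fun i => by have : (0:ℝ) < ε := hε; simp; linarith [hx i]))
  -- symmetry of gstar on the closed cone
  have symm_cl : ∀ (σ : Equiv.Perm (Fin n)) (x : Fin n → ℝ), (∀ i, 0 ≤ x i) →
      gstar (x ∘ σ) = gstar x := by
    intro σ x hx
    have hA := tendsto_g (x ∘ σ) (fun i => hx (σ i))
    have hB := tendsto_g x hx
    have hEq : ∀ᶠ ε in 𝓝[>] (0:ℝ), gstar (x ∘ σ + ε • 1) = gstar (x + ε • 1) := by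
      filter_upwards [self_mem_nhdsWithin] with ε hε
      have hε' : (0:ℝ) < ε := hε
      have hz : (x + ε • (1 : Fin n → ℝ)) ∈ Γ := hmemΓ _ (fun i => by simp; linarith [hx i])
      have hzσ : ((x + ε • (1 : Fin n → ℝ)) ∘ σ) ∈ Γ := by
        rw [hΓ]; intro i; rw [hΓ] at hz; exact hz (σ i)
      have hco : x ∘ σ + ε • (1 : Fin n → ℝ) = (x + ε • (1 : Fin n → ℝ)) ∘ σ := by
        funext m; simp [Function.comp]
      rw [hco, hgstar _ hzσ, hgstar _ hz]
      congr 1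
      have hinv : (fun i => (((x + ε • (1:Fin n → ℝ)) ∘ σ) i)⁻¹) =
          (fun i => ((x + ε • (1:Fin n → ℝ)) i)⁻¹) ∘ σ := rfl
      rw [hinv]
      refine hsym σ _ ?_
      rw [hΓ]; intro i; rw [hΓ] at hz
      exact inv_pos.mpr (hz i)
    exact tendsto_nhds_unique (hA.congr' hEq) hB
  -- homogeneity of gstar on the closed cone
  have hom_cl : ∀ (x : Fin n → ℝ), (∀ i, 0 ≤ x i) → ∀ c : ℝ, 0 < c →
      gstar (c • x) = c * gstar x := by
    intro x hx c hc'
    have hcx : ∀ i, 0 ≤ (c • x) i := fun i => by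
      simpa using mul_nonneg (le_of_lt hc') (hx i)
    have hmap : Tendsto (fun ε : ℝ => c * ε) (𝓝[>] (0:ℝ)) (𝓝[>] (0:ℝ)) := by
      rw [tendsto_nhdsWithin_iff]
      constructor
      · have : Tendsto (fun ε : ℝ => c * ε) (𝓝 0) (𝓝 (c * 0)) :=
          (continuous_const.mul continuous_id).tendsto 0
        simpa using this.mono_left nhdsWithin_le_nhds
      · filter_upwards [self_mem_nhdsWithin] with ε hε
        exact mul_pos hc' hε
    have hA : Tendsto (fun ε : ℝ => gstar (c • x + (c * ε) • 1)) (𝓝[>] (0:ℝ))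
        (𝓝 (gstar (c • x))) := (tendsto_g (c • x) hcx).comp hmap
    have hB : Tendsto (fun ε : ℝ => c * gstar (x + ε • 1)) (𝓝[>] (0:ℝ))
        (𝓝 (c * gstar x)) := (tendsto_g x hx).const_mul c
    have hEq : ∀ᶠ ε in 𝓝[>] (0:ℝ),
        gstar (c • x + (c * ε) • 1) = c * gstar (x + ε • 1) := by
      filter_upwards [self_mem_nhdsWithin] with ε hε
      have hε' : (0:ℝ) < ε := hε
      have hz : (x + ε • (1 : Fin n → ℝ)) ∈ Γ := hmemΓ _ (fun i => by simp; linarith [hx i])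
      have hzin : ∀ i, 0 < (x + ε • (1 : Fin n → ℝ)) i := by rw [hΓ] at hz; exact hz
      have hsc : c • x + (c * ε) • (1 : Fin n → ℝ) = c • (x + ε • 1) := by
        funext m; simp; ring
      rw [hsc, hgstar (c • (x + ε • (1:Fin n → ℝ))) (hmemΓ _ (fun i => by simpa using mul_pos hc' (hzin i))), hgstar _ hz]
      have hinner : (fun i => ((c • (x + ε • (1:Fin n → ℝ))) i)⁻¹) =
          c⁻¹ • (fun i => ((x + ε • (1:Fin n → ℝ)) i)⁻¹) := by
        funext m; simp [mul_inv]; ring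
      rw [hinner, hhom _ (hmemΓ _ (fun i => inv_pos.mpr (hzin i))) c⁻¹ (inv_pos.mpr hc'),
        mul_inv, inv_inv]
    exact tendsto_nhds_unique (hA.congr' hEq) hB
  -- single-coordinate monotonicity on the closed cone
  have mono_cl : ∀ (x : Fin n → ℝ), (∀ i, 0 ≤ x i) → ∀ i : Fin n,
      gstar x ≤ gstar (x + Pi.single i 1) := by
    intro x hx i
    have hx1 : ∀ m, 0 ≤ (x + (Pi.single i 1 : Fin n → ℝ)) m := by
      intro m
      by_cases h : m = i
      · simp [h, Pi.single_apply]; linarith [hx i]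
      · simp [Pi.single_apply, h, hx m]
    have hA := tendsto_g x hx
    have hB := tendsto_g (x + Pi.single i 1) hx1
    have hEq : ∀ᶠ ε in 𝓝[>] (0:ℝ),
        gstar (x + ε • 1) ≤ gstar ((x + Pi.single i 1) + ε • 1) := by
      filter_upwards [self_mem_nhdsWithin] with ε hε
      have hε' : (0:ℝ) < ε := hε
      set z := x + ε • (1 : Fin n → ℝ) with hzdef
      have hzin : ∀ m, 0 < z m := fun m => by simp [hzdef]; linarith [hx m]
      have hz : z ∈ Γ := hmemΓ _ hzin
      have hre : (x + Pi.single i 1) + ε • (1 : Fin n → ℝ) = z + Pi.single i 1 := by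
        funext m; simp [hzdef]; ring
      rw [hre]
      set zinv : Fin n → ℝ := fun m => (z m)⁻¹ with hzinv
      have hzinvΓ : zinv ∈ Γ := hmemΓ _ (fun m => inv_pos.mpr (hzin m))
      have hz1in : ∀ m, 0 < (z + (Pi.single i 1 : Fin n → ℝ)) m := by
        intro m; by_cases h : m = i <;> simp [h, Pi.single_apply, hzin m]
        · linarith [hzin i]
      have hz1 : z + Pi.single i 1 ∈ Γ := hmemΓ _ hz1in
      rw [hgstar _ hz, hgstar _ hz1]
      have hupd : (fun m => ((z + (Pi.single i 1 : Fin n → ℝ)) m)⁻¹) =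
          Function.update zinv i ((z i + 1)⁻¹) := by
        funext m
        by_cases h : m = i
        · subst h; simp [Function.update_self, hzinv]
        · simp [Function.update_of_ne h, hzinv, Pi.single_apply, h]
      have hzid : (fun m => (z m)⁻¹) = Function.update zinv i ((z i)⁻¹) := by
        rw [show ((z i)⁻¹ : ℝ) = zinv i from rfl, Function.update_eq_self]
      have hlt := hmono zinv hzinvΓ i ((z i + 1)⁻¹) ((z i)⁻¹)
        (inv_pos.mpr (by linarith [hzin i])) (by
          apply inv_strictAnti₀ (hzin i); linarith)
      rw [hupd, hzid]
      have hp1 : 0 < f (Function.update zinv i ((z i + 1)⁻¹)) := by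
        apply hpos
        apply hmemΓ
        intro m
        by_cases h : m = i
        · subst h; rw [Function.update_self]; exact inv_pos.mpr (by linarith [hzin m])
        · rw [Function.update_of_ne h]; exact inv_pos.mpr (hzin m)
      exact le_of_lt (inv_strictAnti₀ hp1 hlt)
    exact le_of_tendsto_of_tendsto hA hB hEq
  -- path derivatives through r
  have hpathv : ∀ v : Fin n → ℝ,
      HasDerivAt (fun t : ℝ => gstar (r + t • v)) (fderiv ℝ gstar r v) 0 := by
    intro v
    have h1 : HasDerivAt (fun t : ℝ => r + t • v) v 0 := by
      simpa using ((hasDerivAt_id (0:ℝ)).smul_const v).const_add r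
    have h0 : r + (0:ℝ) • v = r := by simp
    have h2 : HasFDerivAt gstar (fderiv ℝ gstar r) ((fun t : ℝ => r + t • v) 0) := by
      simp only [h0]; exact hdiff.hasFDerivAt
    exact h2.comp_hasDerivAt 0 h1
  -- supporting hyperplane inequality for gstar at r
  have hsupp : ∀ y : Fin n → ℝ, (∀ i, 0 ≤ y i) →
      gstar y - gstar r ≤ fderiv ℝ gstar r (y - r) :=
    fun y hy => support1d_aux hstarconc hrcl (memclos y hy) (hpathv (y - r))
  -- nonnegativity of partial derivatives
  have Dge0 : ∀ i, 0 ≤ D i := by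
    intro i
    have hy : ∀ m, 0 ≤ (r + (Pi.single i 1 : Fin n → ℝ)) m := by
      intro m
      by_cases h : m = i
      · simp [h, Pi.single_apply]; linarith [hr0 i]
      · simp [Pi.single_apply, h, hr0 m]
    have h := hsupp _ hy
    have hsub : r + (Pi.single i 1 : Fin n → ℝ) - r = Pi.single i 1 := by abel
    rw [hsub] at h
    have hm := mono_cl r hr0 i
    simp only [hD]
    linarith
  -- Euler relation
  have hEuler : fderiv ℝ gstar r r = gstar r := by
    have hy2 : ∀ m, 0 ≤ ((2:ℝ) • r) m := fun m => by
      simp [Pi.smul_apply, smul_eq_mul]; linarith [hr0 m]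
    have h2 := hsupp _ hy2
    rw [hom_cl r hr0 2 (by norm_num)] at h2
    have hs2 : (2:ℝ) • r - r = r := by funext m; simp [Pi.smul_apply, smul_eq_mul]; ring
    rw [hs2] at h2
    have hyh : ∀ m, 0 ≤ (((1:ℝ)/2) • r) m := fun m => by
      simp [Pi.smul_apply, smul_eq_mul]; linarith [hr0 m]
    have h3 := hsupp _ hyh
    rw [hom_cl r hr0 ((1:ℝ)/2) (by norm_num)] at h3
    have hs3 : ((1:ℝ)/2) • r - r = (-(1/2) : ℝ) • r := by funext m; simp [Pi.smul_apply, smul_eq_mul]; ring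
    rw [hs3, ContinuousLinearMap.map_smul, smul_eq_mul] at h3
    linarith
  have hr_eq : (∑ i, r i • (Pi.single i 1 : Fin n → ℝ)) = r := by
    funext m
    simp [Finset.sum_apply, Pi.single_apply]
  have hEulerSum : ∑ i, r i * D i = gstar r := by
    calc ∑ i, r i * D i = ∑ i, fderiv ℝ gstar r (r i • (Pi.single i 1 : Fin n → ℝ)) := by
          refine Finset.sum_congr rfl fun i _ => ?_
          rw [ContinuousLinearMap.map_smul, smul_eq_mul]
      _ = fderiv ℝ gstar r (∑ i, r i • (Pi.single i 1 : Fin n → ℝ)) := (map_sum _ _ _).symm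
      _ = fderiv ℝ gstar r r := by rw [hr_eq]
      _ = gstar r := hEuler
  -- equal coordinates give equal partial derivatives
  have hSeq : ∀ i j : Fin n, r i = r j → D i = D j := by
    intro i j hij
    rcases eq_or_ne i j with hij0 | hij0
    · rw [hij0]
    set σ := Equiv.swap i j with hσ
    have hσr : r ∘ σ = r := by
      funext m
      rcases eq_or_ne m i with h | h
      · simp [hσ, h, Equiv.swap_apply_left, hij]
      · rcases eq_or_ne m j with h2 | h2
        · simp [hσ, h2, Equiv.swap_apply_right, hij]
        · simp [hσ, Equiv.swap_apply_of_ne_of_ne h h2]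
    have hvals : ∀ t : ℝ, 0 < t →
        gstar (r + t • (Pi.single i 1 : Fin n → ℝ)) = gstar (r + t • (Pi.single j 1 : Fin n → ℝ)) := by
      intro t ht
      have hperm : r + t • (Pi.single j 1 : Fin n → ℝ) =
          (r + t • (Pi.single i 1 : Fin n → ℝ)) ∘ σ := by
        funext m
        have hr' : r (σ m) = r m := congrFun hσr m
        rcases eq_or_ne m i with h | h
        · simp [Function.comp, hσ, h, Equiv.swap_apply_left, Pi.single_apply, hij0,
            (Ne.symm hij0), hr', hij]
        · rcases eq_or_ne m j with h2 | h2
          · simp [Function.comp, hσ, h2, Equiv.swap_apply_right, Pi.single_apply, hij0,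
              (Ne.symm hij0), hr', hij]
          · simp [Function.comp, hσ, Equiv.swap_apply_of_ne_of_ne h h2, Pi.single_apply,
              h, h2, Ne.symm h, Ne.symm h2, hr']
      have hcoord : ∀ m, 0 ≤ (r + t • (Pi.single i 1 : Fin n → ℝ)) m := by
        intro m
        rcases eq_or_ne m i with h | h
        · simp [h, Pi.single_apply]; nlinarith [hr0 i]
        · simp [Pi.single_apply, h, hr0 m]
      rw [hperm, symm_cl σ _ hcoord]
    have hsi : Tendsto (slope (fun t : ℝ => gstar (r + t • (Pi.single i 1 : Fin n → ℝ))) 0)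
        (𝓝[>] (0:ℝ)) (𝓝 (D i)) :=
      (hasDerivAt_iff_tendsto_slope.mp (hpathv (Pi.single i 1))).mono_left
        (nhdsWithin_mono _ fun t ht => ne_of_gt ht)
    have hsj : Tendsto (slope (fun t : ℝ => gstar (r + t • (Pi.single j 1 : Fin n → ℝ))) 0)
        (𝓝[>] (0:ℝ)) (𝓝 (D j)) :=
      (hasDerivAt_iff_tendsto_slope.mp (hpathv (Pi.single j 1))).mono_left
        (nhdsWithin_mono _ fun t ht => ne_of_gt ht)
    refine tendsto_nhds_unique (hsi.congr' ?_) hsj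
    filter_upwards [self_mem_nhdsWithin] with t ht
    have ht' : (0:ℝ) < t := ht
    rw [slope_def_field, slope_def_field, hvals t ht']
    simp
  -- ordering of the partial derivatives
  have Dord : ∀ i j : Fin n, i ≤ j → D i ≤ D j := by
    intro i j hij
    rcases eq_or_lt_of_le (hord i j hij) with heq | hlt
    · exact le_of_eq (hSeq i j heq.symm)
    · have hne : i ≠ j := fun h => by rw [h] at hlt; exact lt_irrefl _ hlt
      set σ := Equiv.swap i j with hσ
      set y := r ∘ σ with hy
      have hy0 : ∀ m, 0 ≤ y m := fun m => hr0 (σ m)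
      have hgy : gstar y = gstar r := symm_cl σ r hr0
      have hsub : y - r = (r i - r j) • ((Pi.single j 1 : Fin n → ℝ) - Pi.single i 1) := by
        funext m
        rcases eq_or_ne m i with h | h
        · simp [hy, Function.comp, hσ, h, Equiv.swap_apply_left, Pi.single_apply,
            hne, Ne.symm hne]
        · rcases eq_or_ne m j with h2 | h2
          · simp [hy, Function.comp, hσ, h2, Equiv.swap_apply_right, Pi.single_apply,
              hne, Ne.symm hne]
          · simp [hy, Function.comp, hσ, Equiv.swap_apply_of_ne_of_ne h h2,
              Pi.single_apply, h, h2, Ne.symm h, Ne.symm h2]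
      have h := hsupp y hy0
      rw [hgy, sub_self, hsub, ContinuousLinearMap.map_smul, smul_eq_mul,
        ContinuousLinearMap.map_sub] at h
      have hfact : (0:ℝ) ≤ (r i - r j) * (D j - D i) := by
        simpa [hD] using h
      nlinarith [sub_pos.mpr hlt]
  -- basic facts about z0 and k
  have hz0le : ∀ i : Fin n, z0 ≤ i := fun i => Fin.mk_le_of_le_val (Nat.zero_le _)
  have hz0lek : z0 ≤ k := hz0le k
  have hrz0pos : 0 < r z0 := lt_of_lt_of_le hk (hord z0 k hz0lek)
  have hrpos : ∀ m : Fin n, m ≤ k → 0 < r m := fun m hm => lt_of_lt_of_le hk (hord m k hm)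
  -- the key inequality from inverse concavity on the face
  have keyineq : ∀ i : Fin n, i ≤ k → r i ^ 2 * D i ≤ r z0 ^ 2 * D z0 := by
    intro i hik
    rcases eq_or_lt_of_le (hord z0 i (hz0le i)) with heq | hlt
    · rw [heq, hSeq i z0 heq]
    · -- r i < r z0
      have hne : z0 ≠ i := fun h => by rw [← h] at hlt; exact lt_irrefl _ hlt
      set σ := Equiv.swap z0 i with hσ
      have hσk : ∀ m : Fin n, m ≤ k → σ m ≤ k := by
        intro m hm
        rcases eq_or_ne m z0 with h | h
        · rw [h]; simpa [hσ, Equiv.swap_apply_left] using hik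
        · rcases eq_or_ne m i with h2 | h2
          · rw [h2]; simpa [hσ, Equiv.swap_apply_right] using hz0lek
          · simpa [hσ, Equiv.swap_apply_of_ne_of_ne h h2] using hm
      have hσfix : ∀ m : Fin n, ¬ m ≤ k → σ m = m := by
        intro m hm
        apply Equiv.swap_apply_of_ne_of_ne
        · intro h; exact hm (h ▸ hz0lek)
        · intro h; exact hm (h ▸ hik)
      set x0 : Fin n → ℝ := fun m => if m ≤ k then (r m)⁻¹ else 1 with hx0
      have hx0U : ∀ m, 0 < x0 m := by
        intro m
        by_cases h : m ≤ k
        · simp only [hx0]; rw [if_pos h]; exact inv_pos.mpr (hrpos m h)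
        · simp only [hx0]; rw [if_neg h]; norm_num
      set y := x0 ∘ σ with hy
      have hyU : ∀ m, 0 < y m := fun m => hx0U (σ m)
      set T : (Fin n → ℝ) → (Fin n → ℝ) :=
        fun z => fun m => if m ≤ k then (z m)⁻¹ else 0 with hT
      have hTx0 : T x0 = r := by
        funext m
        by_cases h : m ≤ k
        · simp [hT, hx0, h]
        · simp [hT, hx0, h]; exact (hkmax m (lt_of_not_ge h)).symm
      have hTy : T y = r ∘ σ := by
        funext m
        by_cases h : m ≤ k
        · have hk' : σ m ≤ k := hσk m h
          simp [hT, hy, hx0, Function.comp, h, hk']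
        · simp [hT, hy, hx0, Function.comp, h, hσfix m h]
          exact (hkmax m (lt_of_not_ge h)).symm
      set c := y - x0 with hc
      set q' : Fin n → ℝ := fun m => if m ≤ k then -(r m)^2 * c m else 0 with hq'
      have hpath : HasDerivAt (fun t : ℝ => T (x0 + t • c)) q' 0 := by
        rw [hasDerivAt_pi]
        intro m
        by_cases h : m ≤ k
        · have heq2 : (fun t : ℝ => T (x0 + t • c) m) = fun t => (x0 m + t * c m)⁻¹ := by
            funext t; simp [hT, h]
          have hin : HasDerivAt (fun t : ℝ => x0 m + t * c m) (c m) 0 := by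
            simpa using ((hasDerivAt_id (0:ℝ)).mul_const (c m)).const_add (x0 m)
          have h0 : x0 m + 0 * c m ≠ 0 := by simp; exact ne_of_gt (hx0U m)
          have hq'm : q' m = -(c m) / (x0 m + 0 * c m)^2 := by
            have hx0m : x0 m = (r m)⁻¹ := by simp only [hx0]; rw [if_pos h]
            have hrm : r m ≠ 0 := ne_of_gt (hrpos m h)
            simp only [hq', if_pos h, hx0m, zero_mul, add_zero]
            field_simp
          rw [show (fun t : ℝ => T (x0 + t • c) m) = fun t => (x0 m + t * c m)⁻¹ from heq2,
            hq'm]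
          exact hin.inv h0
        · have heq2 : (fun t : ℝ => T (x0 + t • c) m) = fun _ => (0:ℝ) := by
            funext t; simp [hT, h]
          have hq'm : q' m = 0 := by simp [hq', h]
          rw [heq2, hq'm]
          exact hasDerivAt_const 0 0
      have hx0c : x0 + (0:ℝ) • c = x0 := by simp
      have hg0 : HasFDerivAt gstar (fderiv ℝ gstar r) ((fun t : ℝ => T (x0 + t • c)) 0) := by
        simp only [hx0c, hTx0]; exact hdiff.hasFDerivAt
      have hgc := hg0.comp_hasDerivAt 0 hpath
      have hgne : gstar ((fun t : ℝ => T (x0 + t • c)) 0) ≠ 0 := by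
        simp only [hx0c, hTx0]; exact ne_of_gt hfspos
      have hginv := hgc.inv hgne
      have hgval : gstar ((fun t : ℝ => T (x0 + t • c)) 0) = gstar r := by
        simp only [hx0c, hTx0]
      set Dval : ℝ := -(fderiv ℝ gstar r q') / (gstar r)^2 with hDval
      have hginv' : HasDerivAt
          (fun t : ℝ => (gstar (fun m => if m ≤ k then ((x0 + t • c) m)⁻¹ else 0))⁻¹) Dval 0 := by
        rw [hDval, ← hgval]
        exact hginv
      have hsup := support1d_aux hfaceIC (x := x0) (y := y) hx0U hyU (D := Dval) hginv'
      have hφy : gstar (fun m => if m ≤ k then (y m)⁻¹ else 0) = gstar r := by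
        show gstar (T y) = gstar r
        rw [hTy]; exact symm_cl σ r hr0
      have hφx : gstar (fun m => if m ≤ k then (x0 m)⁻¹ else 0) = gstar r := by
        show gstar (T x0) = gstar r
        rw [hTx0]
      rw [hφy, hφx, sub_self] at hsup
      -- compute the derivative value
      set s := (r i)⁻¹ - (r z0)⁻¹ with hs
      have hspos : 0 < s := sub_pos.mpr (inv_strictAnti₀ (hrpos i hik) hlt)
      have hq'eq : q' = s • ((-(r z0)^2) • (Pi.single z0 1 : Fin n → ℝ)
          + ((r i)^2) • (Pi.single i 1 : Fin n → ℝ)) := by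
        funext m
        rcases eq_or_ne m z0 with h | h
        · subst h
          have hyz : y z0 = (r i)⁻¹ := by
            simp only [hy, Function.comp_apply, hσ, Equiv.swap_apply_left, hx0]
            rw [if_pos hik]
          have hxz : x0 z0 = (r z0)⁻¹ := by simp only [hx0]; rw [if_pos hz0lek]
          simp only [hq', if_pos hz0lek, hc, Pi.sub_apply, hyz, hxz, Pi.smul_apply,
            Pi.add_apply, Pi.single_apply, smul_eq_mul, hs]
          simp only [if_true, if_pos rfl, if_neg hne]
          ring
        · rcases eq_or_ne m i with h2 | h2
          · rw [h2]
            have hyz : y i = (r z0)⁻¹ := by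
              simp only [hy, Function.comp_apply, hσ, Equiv.swap_apply_right, hx0]
              rw [if_pos hz0lek]
            have hxz : x0 i = (r i)⁻¹ := by simp only [hx0]; rw [if_pos hik]
            simp only [hq', if_pos hik, hc, Pi.sub_apply, hyz, hxz, Pi.smul_apply,
              Pi.add_apply, Pi.single_apply, smul_eq_mul, hs]
            simp only [if_true, if_pos rfl, if_neg (Ne.symm hne)]
            ring
          · have hσm : σ m = m := Equiv.swap_apply_of_ne_of_ne h h2
            have hcz : y m - x0 m = 0 := by
              simp only [hy, Function.comp_apply, hσm, sub_self]
            simp only [hq', hc, Pi.sub_apply, hcz, Pi.smul_apply, Pi.add_apply,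
              Pi.single_apply, smul_eq_mul, mul_zero]
            simp only [if_neg h, if_neg h2, mul_zero, add_zero, mul_one]
            by_cases hmk : m ≤ k
            · simp [hmk]
            · simp [hmk]
      have hLq : fderiv ℝ gstar r q' = s * (-(r z0)^2 * D z0 + (r i)^2 * D i) := by
        rw [hq'eq, ContinuousLinearMap.map_smul, ContinuousLinearMap.map_add,
          ContinuousLinearMap.map_smul, ContinuousLinearMap.map_smul]
        simp [hD, smul_eq_mul]
      have hg2 : 0 < (gstar r)^2 := pow_pos hfspos 2
      rw [hDval, hLq] at hsup
      have : s * (-(r z0)^2 * D z0 + (r i)^2 * D i) ≤ 0 := by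
        by_contra hcon
        push_neg at hcon
        have : -(s * (-(r z0)^2 * D z0 + (r i)^2 * D i)) / (gstar r)^2 < 0 := by
          apply div_neg_of_neg_of_pos _ hg2
          linarith
        linarith
      nlinarith
  -- final assembly
  have hbound : gstar r * r k ≤ (((k:ℕ):ℝ)+1) * (r z0 ^2 * D z0) := by
    have h2 : ∀ i : Fin n, r i * D i * r k ≤ (if i ≤ k then r z0^2 * D z0 else 0) := by
      intro i
      by_cases h : i ≤ k
      · simp only [if_pos h]
        have h3 : r i * D i * r k ≤ r i * D i * r i := by
          apply mul_le_mul_of_nonneg_left (hord i k h) (mul_nonneg (hr0 i) (Dge0 i))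
        have h4 : r i * D i * r i = r i ^ 2 * D i := by ring
        linarith [keyineq i h]
      · simp only [if_neg h, hkmax i (lt_of_not_ge h)]
        simp
    calc gstar r * r k = (∑ i, r i * D i) * r k := by rw [hEulerSum]
      _ = ∑ i, r i * D i * r k := by rw [Finset.sum_mul]
      _ ≤ ∑ i, (if i ≤ k then r z0^2 * D z0 else 0) := Finset.sum_le_sum (fun i _ => h2 i)
      _ = (((k:ℕ):ℝ)+1) * (r z0 ^2 * D z0) := by
          rw [← Finset.sum_filter,
            show Finset.univ.filter (· ≤ k) = Finset.Iic k from by ext m; simp,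
            Finset.sum_const, Fin.card_Iic, nsmul_eq_mul]
          push_cast
          ring
  have hDz0 : gstar r * r k / ((((k:ℕ):ℝ)+1) * r z0^2) ≤ D z0 := by
    rw [div_le_iff₀ (mul_pos (by positivity) (pow_pos hrz0pos 2))]
    nlinarith [hbound]
  have hlb : 0 < gstar r * r k / ((((k:ℕ):ℝ)+1) * r z0^2) := by
    apply div_pos (mul_pos hfspos hk) (mul_pos (by positivity) (pow_pos hrz0pos 2))
  constructor
  · intro i
    exact lt_of_lt_of_le (lt_of_lt_of_le hlb hDz0) (Dord z0 i (hz0le i))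
  · exact hDz0
end
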